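/- arXiv:2503.14436 — 10 statements merged into one kernel-verified Lean document; each statement's English description precedes it below -/
import Mathlib

section
/- For every ε > 0 there exists a unique real number v₀ > 0 with the following property: the sequence (vₙ)_{n ≥ -1} determined by v₋₁ = 0, the chosen value v₀, and the recurrence vₙ(v_{n+1} + v_{n-1} + 1) = ε(n+1) for all n ≥ 0 (i.e. v_{n+1} = ε(n+1)/vₙ − v_{n−1} − 1) satisfies vₙ > 0 for all n ≥ 0. -/
open Filter Topology Set


/-- The map `T` acting on sequences: `T(u)₀ = ε/(1+u₁)`,
`T(u)ₙ = ε(n+1)/(1 + u_{n-1} + u_{n+1})` for `n ≥ 1`. -/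
noncomputable def Tmap (ε : ℝ) (u : ℕ → ℝ) : ℕ → ℝ
  | 0 => ε / (1 + u 1)
  | (n+1) => ε * ((n : ℝ) + 2) / (1 + u n + u (n+2))

/-- Shifted bound sequences: `bnd ε k = b^{(k-1)}`, i.e. `bnd ε 0 = b^{(-1)} = 0`
and `bnd ε (k+1) = T (bnd ε k)`, so that `b^{(k)} = bnd ε (k+1)` for `k ≥ -1`. -/
noncomputable def bnd (ε : ℝ) : ℕ → ℕ → ℝ
  | 0 => fun _ => 0
  | (k+1) => Tmap ε (bnd ε k)

/-- Shifted rescaled bounds: `rho ε k n = ρ_n^{(k-1)} = b_n^{(k-1)}/(ε(n+1))`. -/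
noncomputable def rho (ε : ℝ) (k n : ℕ) : ℝ := bnd ε k n / (ε * ((n : ℝ) + 1))

/-- The differences `Δd ε k n = Δ_n^{(k)} = (-1)^k (ρ_n^{(k)} - ρ_n^{(k-1)})` for `k ≥ 0`. -/
noncomputable def Δd (ε : ℝ) (k n : ℕ) : ℝ := (-1 : ℝ)^k * (rho ε (k+1) n - rho ε k n)

noncomputable def Vs (ε x : ℝ) : ℕ → ℝ
  | 0 => 0
  | 1 => x
  | (n+2) => ε * ((n : ℝ) + 1) / Vs ε x (n+1) - Vs ε x n - 1

lemma contVs (ε x0 : ℝ) : ∀ m : ℕ, (∀ k, 1 ≤ k → k < m → Vs ε x0 k ≠ 0) →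
    ContinuousAt (fun x => Vs ε x m) x0 := by
  intro m
  induction m using Nat.strong_induction_on with
  | _ m ih =>
    match m with
    | 0 => intro _; exact continuousAt_const
    | 1 => intro _; exact continuousAt_id
    | (n+2) =>
      intro h
      have h1 : ContinuousAt (fun x => Vs ε x (n+1)) x0 :=
        ih (n+1) (by omega) (fun k hk hk' => h k hk (by omega))
      have h0 : ContinuousAt (fun x => Vs ε x n) x0 :=
        ih n (by omega) (fun k hk hk' => h k hk (by omega))
      have hne : Vs ε x0 (n+1) ≠ 0 := h (n+1) (by omega) (by omega)
      have heq : (fun x => Vs ε x (n+2)) =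
          fun x => ε * ((n : ℝ) + 1) / Vs ε x (n+1) - Vs ε x n - 1 := rfl
      rw [heq]
      exact ((continuousAt_const.div h1 hne).sub h0).sub continuousAt_const

def Good (ε : ℝ) (n : ℕ) : Prop := ∃ p q : ℝ, p ≠ q ∧
  (∀ t : ℝ, 0 < t → t ≤ 1 → ∀ k, 1 ≤ k → k ≤ n → 0 < Vs ε (p + t*(q-p)) k) ∧
  (∀ k, 1 ≤ k → k < n → 0 < Vs ε p k) ∧ Vs ε p n = 0 ∧ Vs ε (p + 1*(q-p)) (n+1) ≤ 0

lemma good_one (ε : ℝ) (hε : 0 < ε) : Good ε 1 := by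
  refine ⟨0, ε, hε.ne, ?_, ?_, rfl, ?_⟩
  · intro t ht ht1 k hk hk1
    have : k = 1 := le_antisymm hk1 hk
    subst this
    show 0 < 0 + t*(ε-0)
    nlinarith
  · intro k hk hk1; omega
  · show Vs ε (0 + 1*(ε-0)) 2 ≤ 0
    have h1 : (0:ℝ) + 1*(ε-0) = ε := by ring
    rw [h1]
    show ε * ((0:ℕ) + 1 : ℝ) / Vs ε ε 1 - Vs ε ε 0 - 1 ≤ 0
    show ε * ((0:ℕ) + 1 : ℝ) / ε - 0 - 1 ≤ 0
    rw [show ((0:ℕ) + 1 : ℝ) = 1 by norm_num, mul_one, div_self hε.ne']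
    norm_num

lemma good_step (ε : ℝ) (hε : 0 < ε) (m : ℕ) (hg : Good ε (m+1)) : Good ε (m+2) := by
  obtain ⟨p, q, hpq, hIoc, hplt, hpz, hqle⟩ := hg
  set x : ℝ → ℝ := fun t => p + t * (q - p) with hxdef
  have hxc : Continuous x := by
    apply continuous_const.add (continuous_id.mul continuous_const)
  have hcont : ∀ t : ℝ, 0 < t → t ≤ 1 → ∀ j, j ≤ m + 2 →
      ContinuousAt (fun s => Vs ε (x s) j) t := by
    intro t ht ht1 j hj
    exact (contVs ε (x t) j (fun k hk hkj =>
      ne_of_gt (hIoc t ht ht1 k hk (by omega)))).comp hxc.continuousAt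
  have hx0 : x 0 = p := by simp [hxdef]
  -- V (x t) (m+1) → 0 as t → 0+
  have hd0 : Tendsto (fun t => Vs ε (x t) (m+1)) (𝓝[>] (0:ℝ)) (𝓝 0) := by
    have hc : ContinuousAt (fun y => Vs ε y (m+1)) p :=
      contVs ε p (m+1) (fun k hk hkj => ne_of_gt (hplt k hk hkj))
    have hxt : Tendsto x (𝓝[>] (0:ℝ)) (𝓝 p) := by
      have := (hxc.tendsto 0).mono_left (nhdsWithin_le_nhds (s := Ioi (0:ℝ)))
      rwa [hx0] at this
    have := (hc.tendsto).comp hxt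
    rwa [hpz] at this
  have hIocm : Ioc (0:ℝ) 1 ∈ 𝓝[>] (0:ℝ) := Ioc_mem_nhdsGT_of_mem ⟨le_refl 0, one_pos⟩
  have hdpos : ∀ᶠ t in 𝓝[>] (0:ℝ), 0 < Vs ε (x t) (m+1) :=
    Filter.eventually_of_mem hIocm (fun t ht => hIoc t ht.1 ht.2 (m+1) (by omega) le_rfl)
  have hd0' : Tendsto (fun t => Vs ε (x t) (m+1)) (𝓝[>] (0:ℝ)) (𝓝[>] 0) :=
    tendsto_nhdsWithin_of_tendsto_nhds_of_eventually_within _ hd0 hdpos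
  -- V (x t) m → Vs ε p m
  have hdm : Tendsto (fun t => Vs ε (x t) m) (𝓝[>] (0:ℝ)) (𝓝 (Vs ε p m)) := by
    have hc : ContinuousAt (fun y => Vs ε y m) p :=
      contVs ε p m (fun k hk hkj => ne_of_gt (hplt k hk (by omega)))
    have hxt : Tendsto x (𝓝[>] (0:ℝ)) (𝓝 p) := by
      have := (hxc.tendsto 0).mono_left (nhdsWithin_le_nhds (s := Ioi (0:ℝ)))
      rwa [hx0] at this
    exact hc.tendsto.comp hxt
  -- g → +∞ at 0+
  have hgid : (fun t => Vs ε (x t) (m+2)) =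
      fun t => ε * ((m:ℝ)+1) / Vs ε (x t) (m+1) + (-(Vs ε (x t) m) - 1) := by
    funext t; show Vs ε (x t) (m+2) = _
    rw [show Vs ε (x t) (m+2) = ε * ((m:ℝ) + 1) / Vs ε (x t) (m+1) - Vs ε (x t) m - 1 from rfl]
    ring
  have hgtop : Tendsto (fun t => Vs ε (x t) (m+2)) (𝓝[>] (0:ℝ)) atTop := by
    rw [hgid]
    apply Filter.Tendsto.atTop_add (C := -(Vs ε p m) - 1)
    · have hinv : Tendsto (fun t => (Vs ε (x t) (m+1))⁻¹) (𝓝[>] (0:ℝ)) atTop :=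
        tendsto_inv_nhdsGT_zero.comp hd0'
      have := hinv.const_mul_atTop (show (0:ℝ) < ε * ((m:ℝ)+1) by positivity)
      simpa [div_eq_mul_inv] using this
    · exact (hdm.neg).sub tendsto_const_nhds
  -- choose t0
  have hev : ∀ᶠ t in 𝓝[>] (0:ℝ), t ∈ Ioc (0:ℝ) 1 ∧ 1 ≤ Vs ε (x t) (m+2) :=
    (Filter.eventually_of_mem hIocm (fun t ht => ht)).and (hgtop.eventually (eventually_ge_atTop 1))
  obtain ⟨u, hu, husub⟩ := mem_nhdsGT_iff_exists_Ioc_subset.mp hev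
  set t0 : ℝ := min u (1/2) with ht0def
  have ht0pos : 0 < t0 := lt_min hu (by norm_num)
  have ht0lt1 : t0 < 1 := lt_of_le_of_lt (min_le_right _ _) (by norm_num)
  have hgt0 : ∀ t, 0 < t → t ≤ t0 → 1 ≤ Vs ε (x t) (m+2) := by
    intro t ht htle
    exact (husub ⟨ht, le_trans htle (min_le_left _ _)⟩).2
  -- h → -1 at 0+, pick t1
  have hhid : (fun t => Vs ε (x t) (m+3)) =
      fun t => ε * ((m:ℝ)+2) / Vs ε (x t) (m+2) - Vs ε (x t) (m+1) - 1 := by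
    funext t
    show Vs ε (x t) ((m+1)+2) = _
    rw [show Vs ε (x t) ((m+1)+2) =
      ε * (((m+1):ℕ) + 1 : ℝ) / Vs ε (x t) (m+2) - Vs ε (x t) (m+1) - 1 from rfl]
    push_cast; ring_nf
  have hhtend : Tendsto (fun t => Vs ε (x t) (m+3)) (𝓝[>] (0:ℝ)) (𝓝 (0 - 0 - 1)) := by
    rw [hhid]
    exact ((Filter.Tendsto.div_atTop tendsto_const_nhds hgtop).sub hd0).sub tendsto_const_nhds
  have hhev : ∀ᶠ t in 𝓝[>] (0:ℝ), Vs ε (x t) (m+3) < 0 := by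
    apply hhtend.eventually_lt_const
    norm_num
  have hIoo : Ioo (0:ℝ) t0 ∈ 𝓝[>] (0:ℝ) := Ioo_mem_nhdsGT_of_mem ⟨le_refl 0, ht0pos⟩
  obtain ⟨t1, ht1mem, ht1neg⟩ := ((Filter.eventually_of_mem hIoo (fun s hs => hs)).and hhev).exists
  -- the crossing point c
  set S : Set ℝ := {s : ℝ | t0 ≤ s ∧ s ≤ 1 ∧ Vs ε (x s) (m+2) ≤ 0} with hSdef
  have h1S : (1:ℝ) ∈ S := by
    refine ⟨ht0lt1.le, le_refl 1, ?_⟩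
    exact hqle
  have hSne : S.Nonempty := ⟨1, h1S⟩
  have hSbdd : BddBelow S := ⟨t0, fun s hs => hs.1⟩
  set c : ℝ := sInf S with hcdef
  have hct0 : t0 ≤ c := le_csInf hSne (fun s hs => hs.1)
  have hc1 : c ≤ 1 := csInf_le hSbdd h1S
  have hcpos : 0 < c := lt_of_lt_of_le ht0pos hct0
  have hgc_cont : ContinuousAt (fun s => Vs ε (x s) (m+2)) c := hcont c hcpos hc1 (m+2) le_rfl
  have hgc_le : Vs ε (x c) (m+2) ≤ 0 := by
    obtain ⟨w, hwS, hwc⟩ := mem_closure_iff_seq_limit.mp (csInf_mem_closure hSne hSbdd)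
    have : Tendsto (fun i => Vs ε (x (w i)) (m+2)) atTop (𝓝 (Vs ε (x c) (m+2))) :=
      hgc_cont.tendsto.comp hwc
    exact le_of_tendsto this (Filter.Eventually.of_forall (fun i => (hwS i).2.2))
  have ht0c : t0 < c := by
    rcases lt_or_eq_of_le hct0 with h | h
    · exact h
    · exfalso
      have := hgt0 c hcpos (le_of_eq h.symm)
      linarith
  have hgpos : ∀ s, 0 < s → s < c → 0 < Vs ε (x s) (m+2) := by
    intro s hs hsc
    rcases le_or_gt s t0 with h | h
    · linarith [hgt0 s hs h]
    · by_contra hc2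
      push_neg at hc2
      have : s ∈ S := ⟨h.le, by linarith, hc2⟩
      have := csInf_le hSbdd this
      rw [← hcdef] at this
      linarith
  have hgc_ge : 0 ≤ Vs ε (x c) (m+2) := by
    have htd : Tendsto (fun s => Vs ε (x s) (m+2)) (𝓝[<] c) (𝓝 (Vs ε (x c) (m+2))) :=
      hgc_cont.tendsto.mono_left nhdsWithin_le_nhds
    have hIooc : Ioo (0:ℝ) c ∈ 𝓝[<] c := Ioo_mem_nhdsLT_of_mem ⟨hcpos, le_refl c⟩
    exact ge_of_tendsto htd (Filter.eventually_of_mem hIooc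
      (fun s hs => (hgpos s hs.1 hs.2).le))
  have hgc : Vs ε (x c) (m+2) = 0 := le_antisymm hgc_le hgc_ge
  -- assemble
  refine ⟨x c, x t1, ?_, ?_, ?_, hgc, ?_⟩
  · intro hcon
    apply hpq
    have h2 : (c - t1) * (q - p) = 0 := by
      have : x c - x t1 = (c - t1) * (q - p) := by simp only [hxdef]; ring
      rw [← this, hcon, sub_self]
    rcases mul_eq_zero.mp h2 with h | h
    · exfalso; have : t1 < c := lt_trans ht1mem.2 ht0c; linarith [sub_eq_zero.mp h]
    · linarith [sub_eq_zero.mp h]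
  · intro s hs hs1 k hk hkle
    have hpt : x c + s*(x t1 - x c) = x (c + s*(t1 - c)) := by simp only [hxdef]; ring
    rw [hpt]
    set v : ℝ := c + s*(t1 - c) with hvdef
    have ht1c : t1 < c := lt_trans ht1mem.2 ht0c
    have hv1 : t1 ≤ v := by nlinarith
    have hv2 : v < c := by nlinarith
    have hvpos : 0 < v := lt_of_lt_of_le ht1mem.1 hv1
    have hvle1 : v ≤ 1 := le_trans hv2.le hc1
    rcases le_or_gt k (m+1) with hkm | hkm
    · exact hIoc v hvpos hvle1 k hk hkm
    · have : k = m+2 := by omega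
      subst this
      exact hgpos v hvpos hv2
  · intro k hk hklt
    exact hIoc c hcpos hc1 k hk (by omega)
  · have hpt : x c + 1*(x t1 - x c) = x t1 := by ring
    rw [hpt]
    exact ht1neg.le

lemma good_all (ε : ℝ) (hε : 0 < ε) : ∀ n : ℕ, Good ε (n+1) := by
  intro n
  induction n with
  | zero => exact good_one ε hε
  | succ n ih => exact good_step ε hε n ih

lemma exists_pos (ε : ℝ) (hε : 0 < ε) :
    ∃ x : ℝ, 0 < x ∧ ∀ k : ℕ, 0 < Vs ε x (k+1) := by
  set A : ℕ → Set ℝ := fun n => {y : ℝ | y ∈ Icc 0 ε ∧ ∀ k, 1 ≤ k → k ≤ n → 0 < Vs ε y k}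
    with hAdef
  have hAwit : ∀ n : ℕ, (A (n+2)).Nonempty := by
    intro n
    obtain ⟨p, q, hpq, hIoc, -, -, -⟩ := good_all ε hε (n+1)
    refine ⟨p + 1*(q-p), ⟨?_, ?_⟩⟩
    · have h1 : 0 < Vs ε (p + 1*(q-p)) 1 := hIoc 1 one_pos le_rfl 1 le_rfl (by omega)
      have h2 : 0 < Vs ε (p + 1*(q-p)) 2 := hIoc 1 one_pos le_rfl 2 (by omega) (by omega)
      have hq1 : Vs ε (p + 1*(q-p)) 1 = p + 1*(q-p) := rfl
      rw [hq1] at h1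
      have hq2 : Vs ε (p + 1*(q-p)) 2
          = ε * ((0:ℕ) + 1 : ℝ) / Vs ε (p + 1*(q-p)) 1 - Vs ε (p + 1*(q-p)) 0 - 1 := rfl
      rw [hq2, hq1] at h2
      have h0 : Vs ε (p + 1*(q-p)) 0 = 0 := rfl
      rw [h0] at h2
      push_cast at h2
      have hlt : p + 1*(q-p) < ε := by
        have hd : 0 < ε * (0 + 1) / (p + 1*(q-p)) - 0 - 1 := h2
        rw [zero_add, mul_one] at hd
        have : 1 < ε / (p + 1*(q-p)) := by linarith
        have := (one_lt_div h1).mp this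
        linarith
      exact ⟨h1.le, hlt.le⟩
    · intro k hk hkle
      exact hIoc 1 one_pos le_rfl k hk (by omega)
  have hAne : ∀ n : ℕ, (A n).Nonempty := by
    intro n
    obtain ⟨y, hy1, hy2⟩ := hAwit n
    exact ⟨y, hy1, fun k hk hkn => hy2 k hk (by omega)⟩
  have hAnest : ∀ n : ℕ, A (n+1) ⊆ A n := by
    intro n y hy
    exact ⟨hy.1, fun k hk hkn => hy.2 k hk (by omega)⟩
  set C : ℕ → Set ℝ := fun n => closure (A n) with hCdef
  have hCne : ∀ n, (C n).Nonempty := fun n => (hAne n).closure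
  have hCnest : ∀ n, C (n+1) ⊆ C n := fun n => closure_mono (hAnest n)
  have hAIcc : ∀ n, A n ⊆ Icc 0 ε := fun n y hy => hy.1
  have hC0 : IsCompact (C 0) :=
    IsCompact.of_isClosed_subset isCompact_Icc isClosed_closure
      (closure_minimal (hAIcc 0) isClosed_Icc)
  obtain ⟨x0, hx0⟩ := IsCompact.nonempty_iInter_of_sequence_nonempty_isCompact_isClosed
    C hCnest hCne hC0 (fun n => isClosed_closure)
  have hx0C : ∀ n, x0 ∈ C n := by
    intro n
    exact Set.mem_iInter.mp hx0 n
  -- key induction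
  have claim : ∀ K : ℕ, ∀ j, 1 ≤ j → j ≤ K → 0 < Vs ε x0 j := by
    intro K
    induction K with
    | zero => intro j hj hj0; omega
    | succ K ih =>
      have hcontm : ∀ i, i ≤ K+1 → ContinuousAt (fun y => Vs ε y i) x0 := by
        intro i hi
        exact contVs ε x0 i (fun k hk hki => ne_of_gt (ih k hk (by omega)))
      obtain ⟨w, hwA, hwlim⟩ := mem_closure_iff_seq_limit.mp (hx0C (K+3))
      have hT1 : Tendsto (fun i => Vs ε (w i) (K+1)) atTop (𝓝 (Vs ε x0 (K+1))) :=
        (hcontm (K+1) le_rfl).tendsto.comp hwlim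
      have hwpos : ∀ i, ∀ k, 1 ≤ k → k ≤ K+3 → 0 < Vs ε (w i) k :=
        fun i => (hwA i).2
      have hge : 0 ≤ Vs ε x0 (K+1) :=
        ge_of_tendsto hT1 (Filter.Eventually.of_forall
          (fun i => (hwpos i (K+1) (by omega) (by omega)).le))
      have hKpos : 0 < Vs ε x0 (K+1) := by
        rcases lt_or_eq_of_le hge with h | h
        · exact h
        · exfalso
          -- Vs x0 (K+1) = 0 : blow-up argument
          have hz : Vs ε x0 (K+1) = 0 := h.symm
          have hT1' : Tendsto (fun i => Vs ε (w i) (K+1)) atTop (𝓝[>] 0) := by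
            apply tendsto_nhdsWithin_of_tendsto_nhds_of_eventually_within
            · rwa [hz] at hT1
            · exact Filter.Eventually.of_forall (fun i => hwpos i (K+1) (by omega) (by omega))
          have hTK : Tendsto (fun i => Vs ε (w i) K) atTop (𝓝 (Vs ε x0 K)) :=
            (hcontm K (by omega)).tendsto.comp hwlim
          have hT2 : Tendsto (fun i => Vs ε (w i) (K+2)) atTop atTop := by
            have hgid : (fun i => Vs ε (w i) (K+2)) =
                fun i => ε * ((K:ℝ)+1) / Vs ε (w i) (K+1) + (-(Vs ε (w i) K) - 1) := by
              funext i
              rw [show Vs ε (w i) (K+2) =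
                ε * ((K:ℝ) + 1) / Vs ε (w i) (K+1) - Vs ε (w i) K - 1 from rfl]
              ring
            rw [hgid]
            apply Filter.Tendsto.atTop_add (C := -(Vs ε x0 K) - 1)
            · have hinv : Tendsto (fun i => (Vs ε (w i) (K+1))⁻¹) atTop atTop :=
                tendsto_inv_nhdsGT_zero.comp hT1'
              have := hinv.const_mul_atTop (show (0:ℝ) < ε * ((K:ℝ)+1) by positivity)
              simpa [div_eq_mul_inv] using this
            · exact (hTK.neg).sub tendsto_const_nhds
          have hT3 : Tendsto (fun i => Vs ε (w i) (K+3)) atTop (𝓝 (0 - 0 - 1)) := by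
            have hhid : (fun i => Vs ε (w i) (K+3)) =
                fun i => ε * ((K:ℝ)+2) / Vs ε (w i) (K+2) - Vs ε (w i) (K+1) - 1 := by
              funext i
              rw [show Vs ε (w i) ((K+1)+2) =
                ε * (((K+1):ℕ) + 1 : ℝ) / Vs ε (w i) (K+2) - Vs ε (w i) (K+1) - 1 from rfl]
              push_cast
              ring_nf
            rw [hhid]
            refine ((Filter.Tendsto.div_atTop tendsto_const_nhds hT2).sub ?_).sub
              tendsto_const_nhds
            rwa [hz] at hT1
          have hbad : ∀ᶠ i in atTop, Vs ε (w i) (K+3) < 0 := by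
            apply hT3.eventually_lt_const
            norm_num
          obtain ⟨i, hi⟩ := hbad.exists
          exact absurd (hwpos i (K+3) (by omega) (by omega)) (not_lt.mpr hi.le)
      intro j hj hjK
      rcases le_or_gt j K with h | h
      · exact ih j hj h
      · have : j = K+1 := by omega
        subst this
        exact hKpos
  have hx0pos : 0 < x0 := by
    have := claim 1 1 le_rfl le_rfl
    exact this
  exact ⟨x0, hx0pos, fun k => claim (k+1) (k+1) (by omega) le_rfl⟩

lemma uniq_aux (ε : ℝ) (hε : 0 < ε) (a b : ℕ → ℝ)
    (ha0 : a 0 = 0) (hb0 : b 0 = 0)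
    (hae : ∀ n : ℕ, a (n+1) * (a (n+2) + a n + 1) = ε * ((n : ℝ) + 1))
    (hbe : ∀ n : ℕ, b (n+1) * (b (n+2) + b n + 1) = ε * ((n : ℝ) + 1))
    (hap : ∀ n : ℕ, 0 < a (n+1)) (hbp : ∀ n : ℕ, 0 < b (n+1))
    (hlt : a 1 < b 1) : False := by
  set t : ℕ → ℝ := fun n => (-1:ℝ)^(n+1) * (b n - a n) with htdef
  have hbnn : ∀ n, 0 ≤ b n := by
    intro n; cases n with
    | zero => rw [hb0]
    | succ k => exact (hbp k).le
  have hann : ∀ n, 0 ≤ a n := by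
    intro n; cases n with
    | zero => rw [ha0]
    | succ k => exact (hap k).le
  have hble : ∀ n, b n ≤ ε * n := by
    intro n; cases n with
    | zero => simp [hb0]
    | succ k =>
      have h := hbe k
      push_cast
      nlinarith [hbp k, hbnn k, hbnn (k+2)]
  have hclb : ∀ n, ε/(2*ε+1) ≤ b (n+1) := by
    intro n
    have he := hbe n
    have h2 := hble (n+2)
    have h0 := hble n
    push_cast at h2
    have hX : ε*((n:ℝ)+1) ≤ b (n+1) * (2*ε*((n:ℝ)+1)+1) := by nlinarith [hbp n]
    rw [div_le_iff₀ (by positivity)]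
    have hXε : ε ≤ ε*((n:ℝ)+1) := by nlinarith [show (0:ℝ) ≤ (n:ℝ) from Nat.cast_nonneg n]
    nlinarith [hbp n, mul_nonneg (hbp n).le (sub_nonneg.mpr hXε)]
  have hprod : ∀ n, b (n+1) * b (n+2) ≤ ε*((n:ℝ)+1) := by
    intro n
    nlinarith [hbe n, mul_nonneg (hbp n).le (hbnn n), hbp n]
  have ht0 : t 0 = 0 := by simp [htdef, ha0, hb0]
  have ht1 : t 1 = b 1 - a 1 := by norm_num [htdef]
  have hIa : ∀ n, t (n+2) * a (n+1) = t (n+1) * (b (n+2) + b n + 1) - t n * a (n+1) := by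
    intro n
    have key : (t (n+2) * a (n+1)) * b (n+1)
        = (t (n+1) * (b (n+2) + b n + 1) - t n * a (n+1)) * b (n+1) := by
      simp only [htdef]
      linear_combination ((-1:ℝ)^(n+1) * b (n+1)) * hbe n - ((-1:ℝ)^(n+1) * b (n+1)) * hae n
    exact mul_right_cancel₀ (hbp n).ne' key
  have hIb : ∀ n, t (n+2) * b (n+1) = t (n+1) * (a (n+2) + a n + 1) - t n * b (n+1) := by
    intro n
    have key : (t (n+2) * b (n+1)) * a (n+1)
        = (t (n+1) * (a (n+2) + a n + 1) - t n * b (n+1)) * a (n+1) := by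
      simp only [htdef]
      linear_combination ((-1:ℝ)^(n+1) * a (n+1)) * hbe n - ((-1:ℝ)^(n+1) * a (n+1)) * hae n
    exact mul_right_cancel₀ (hap n).ne' key
  have main : ∀ n, (0 < t (n+1)) ∧ (t n * a (n+1) ≤ t (n+1) * b n)
      ∧ (t n * b (n+1) ≤ t (n+1) * (a n + 1)) := by
    intro n
    induction n with
    | zero =>
      refine ⟨by rw [ht1]; linarith, ?_, ?_⟩
      · simp [ht0, hb0]
      · rw [ht0, ha0]; rw [ht1]; nlinarith
    | succ n ih =>
      obtain ⟨hP, hH, hG⟩ := ih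
      have hstar : t (n+1) * (b (n+2) + 1) ≤ t (n+2) * a (n+1) := by
        nlinarith [hIa n, hH]
      have hP2 : 0 < t (n+2) := by
        have h1 : 0 < t (n+1) * (b (n+2) + 1) := mul_pos hP (by nlinarith [hbp (n+1)])
        by_contra hc
        push_neg at hc
        nlinarith [mul_nonneg (neg_nonneg.mpr hc) (hap n).le]
      have hH2 : t (n+1) * a (n+2) ≤ t (n+2) * b (n+1) := by
        nlinarith [hIb n, hG]
      have hG2 : t (n+1) * b (n+2) ≤ t (n+2) * (a (n+1) + 1) := by
        nlinarith [hstar, hP2.le, hP.le]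
      exact ⟨hP2, hH2, hG2⟩
  have htpos : ∀ n, 0 < t (n+1) := fun n => (main n).1
  have htnn : ∀ n, 0 ≤ t n := by
    intro n; cases n with
    | zero => rw [ht0]
    | succ k => exact (htpos k).le
  have hF1 : ∀ n, t n * (b (n+2) + 1) ≤ t (n+2) * b n := by
    intro n
    have hstar : t (n+1) * (b (n+2) + 1) ≤ t (n+2) * a (n+1) := by
      nlinarith [hIa n, (main n).2.1]
    have hH := (main n).2.1
    have h1 : (t (n+1) * (b (n+2) + 1)) * (t n * a (n+1)) ≤ (t (n+2) * a (n+1)) * (t (n+1) * b n) :=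
      mul_le_mul hstar hH (mul_nonneg (htnn n) (hap n).le)
        (le_trans (mul_nonneg (htpos n).le (by nlinarith [hbp (n+1)])) hstar)
    have h2 : 0 < t (n+1) * a (n+1) := mul_pos (htpos n) (hap n)
    have h1' : (t (n+1) * a (n+1)) * (t n * (b (n+2) + 1))
        ≤ (t (n+1) * a (n+1)) * (t (n+2) * b n) := by nlinarith [h1]
    exact le_of_mul_le_mul_left h1' h2
  -- parity: t(2m+1) ≤ b(2m+1)
  have htb : ∀ m : ℕ, t (2*m+1) ≤ b (2*m+1) := by
    intro m
    have : t (2*m+1) = b (2*m+1) - a (2*m+1) := by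
      simp only [htdef]
      have : ((-1:ℝ))^(2*m+1+1) = 1 := by
        rw [show 2*m+1+1 = 2*(m+1) by ring, pow_mul]
        norm_num
      rw [this]; ring
    rw [this]
    linarith [hap (2*m)]
  set ρ : ℕ → ℝ := fun m => t (2*m+1) / b (2*m+1) with hρdef
  set σ : ℕ → ℝ := fun M => ∑ m ∈ Finset.range M, 1/b (2*m+3) with hσdef
  have hρpos : ∀ m, 0 < ρ m := fun m => div_pos (htpos _) (hbp _)
  have hρle1 : ∀ m, ρ m ≤ 1 := fun m => (div_le_one (hbp _)).mpr (htb m)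
  have hσnn : ∀ M, 0 ≤ σ M := by
    intro M
    exact Finset.sum_nonneg fun m _ => one_div_nonneg.mpr (hbnn _)
  have hstep : ∀ M, ρ M + ρ M * (1/b (2*M+3)) ≤ ρ (M+1) := by
    intro M
    have hF : t (2*M+1) * (b (2*M+3) + 1) ≤ t (2*M+3) * b (2*M+1) := hF1 (2*M+1)
    have hb1 : (0:ℝ) < b (2*M+1) := hbp (2*M)
    have hb3 : (0:ℝ) < b (2*M+3) := hbp (2*M+2)
    have hi2 : 2*(M+1)+1 = 2*M+3 := by ring
    simp only [hρdef, hi2]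
    have e : t (2*M+1) / b (2*M+1) + t (2*M+1) / b (2*M+1) * (1/b (2*M+3))
        = (t (2*M+1) * (b (2*M+3)+1)) / (b (2*M+1) * b (2*M+3)) := by
      field_simp
    rw [e, div_le_div_iff₀ (by positivity) hb3]
    nlinarith [mul_le_mul_of_nonneg_right hF hb3.le, hb1, hb3]
  have hsum : ∀ M, ρ 0 * (1 + σ M) ≤ ρ M := by
    intro M
    induction M with
    | zero => simp [hσdef]
    | succ M ih =>
      have hσs : σ (M+1) = σ M + 1/b (2*M+3) := by
        simp only [hσdef]
        exact Finset.sum_range_succ _ _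
      have hρ0M : ρ 0 ≤ ρ M := by nlinarith [hσnn M, hρpos 0]
      have hbM := hbp (2*M+2)
      have h3 : ρ 0 * (1/b (2*M+3)) ≤ ρ M * (1/b (2*M+3)) := by
        apply mul_le_mul_of_nonneg_right hρ0M
        positivity
      calc ρ 0 * (1 + σ (M+1)) = ρ 0 * (1 + σ M) + ρ 0 * (1/b (2*M+3)) := by
            rw [hσs]; ring
        _ ≤ ρ M + ρ M * (1/b (2*M+3)) := by linarith
        _ ≤ ρ (M+1) := hstep M
  have hσb : ∀ M, σ M ≤ 1/ρ 0 := by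
    intro M
    rw [le_div_iff₀ (hρpos 0)]
    nlinarith [hsum M, hρle1 M, hρpos 0]
  -- lower bound each term
  set c : ℝ := ε/(2*ε+1) with hcdef
  have hcpos : 0 < c := by positivity
  have hterm : ∀ m : ℕ, c/(3*ε) * (1/((m:ℝ)+1)) ≤ 1/b (2*m+3) := by
    intro m
    have h1 := hprod (2*m+2)
    have hi : 2*m+2+1 = 2*m+3 ∧ 2*m+2+2 = 2*m+4 := ⟨by ring, by ring⟩
    rw [hi.1, hi.2] at h1
    push_cast at h1
    have h2 : c ≤ b (2*m+4) := hclb (2*m+3)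
    have hb3 : (0:ℝ) < b (2*m+3) := hbp (2*m+2)
    have h3 : c * b (2*m+3) ≤ 3*ε*((m:ℝ)+1) := by
      nlinarith [mul_le_mul_of_nonneg_right h2 (hbnn (2*m+3)), h1, hε.le,
        show (0:ℝ) ≤ (m:ℝ) from Nat.cast_nonneg m]
    rw [le_div_iff₀ hb3]
    have heq : c/(3*ε) * (1/((m:ℝ)+1)) * b (2*m+3) = (c * b (2*m+3)) / (3*ε*((m:ℝ)+1)) := by
      field_simp
      try ring
    rw [heq, div_le_one (by positivity)]
    linarith
  have hKsum : ∀ M, c/(3*ε) * (∑ m ∈ Finset.range M, 1/((m:ℝ)+1)) ≤ 1/ρ 0 := by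
    intro M
    rw [Finset.mul_sum]
    calc ∑ m ∈ Finset.range M, c/(3*ε) * (1/((m:ℝ)+1))
        ≤ ∑ m ∈ Finset.range M, 1/b (2*m+3) := Finset.sum_le_sum (fun m _ => hterm m)
      _ ≤ 1/ρ 0 := hσb M
  -- divergence of harmonic sums
  have hdvg : Tendsto (fun M : ℕ => ∑ m ∈ Finset.range M, 1/((m:ℝ)+1)) atTop atTop := by
    have hns : ¬ Summable (fun m : ℕ => 1/((m:ℝ)+1)) := by
      intro h
      apply Real.not_summable_one_div_natCast
      exact (summable_nat_add_iff 1).mp (by simpa using h)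
    exact (not_summable_iff_tendsto_nat_atTop_of_nonneg (fun i => by positivity)).mp hns
  have hKpos : 0 < c/(3*ε) := by positivity
  obtain ⟨M, hM⟩ := (hdvg.eventually (eventually_gt_atTop ((1/ρ 0)/(c/(3*ε))))).exists
  have := hKsum M
  rw [div_lt_iff₀ hKpos] at hM
  linarith [hM]

lemma Vs_equation (ε x : ℝ) (hpos : ∀ k : ℕ, 0 < Vs ε x (k+1)) :
    ∀ n : ℕ, Vs ε x (n+1) * (Vs ε x (n+2) + Vs ε x n + 1) = ε * ((n : ℝ) + 1) := by
  intro n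
  have h2 : Vs ε x (n+2) = ε * ((n : ℝ) + 1) / Vs ε x (n+1) - Vs ε x n - 1 := rfl
  have hne : Vs ε x (n+1) ≠ 0 := (hpos n).ne'
  rw [h2]
  field_simp
  ring

/-- For every ε > 0 there is a unique v₀ > 0 such that the dP_I sequence
with v₋₁ = 0 and initial value v₀ is positive. Here `v m` denotes `v_{m-1}`. -/
theorem statement0 (ε : ℝ) (hε : 0 < ε) :
    ∃! v0 : ℝ, 0 < v0 ∧
      ∃ v : ℕ → ℝ, v 0 = 0 ∧ v 1 = v0 ∧
        (∀ n : ℕ, v (n+1) * (v (n+2) + v n + 1) = ε * ((n : ℝ) + 1)) ∧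
        (∀ n : ℕ, 0 < v (n+1)) := by
  obtain ⟨x, hx, hpos⟩ := exists_pos ε hε
  have heqn := Vs_equation ε x hpos
  refine ⟨x, ⟨hx, Vs ε x, rfl, rfl, heqn, hpos⟩, ?_⟩
  rintro y ⟨hy, w, hw0, hw1, hweq, hwpos⟩
  by_contra hne
  rcases lt_or_gt_of_ne hne with h | h
  · exact uniq_aux ε hε w (Vs ε x) hw0 rfl hweq heqn hwpos hpos
      (by rw [hw1]; exact h)
  · exact uniq_aux ε hε (Vs ε x) w rfl hw0 heqn hweq hpos hwpos
      (by rw [hw1]; exact h)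
end

section
/- For every ε > 0, every sequence u ∈ 𝒜⁰, every integer j ≥ 0 and every n ≥ 0, the iterates of T satisfy b_n^{(2j-1)} ≤ T^{2j}(u)_n ≤ b_n^{(2j)} and b_n^{(2j+1)} ≤ T^{2j+1}(u)_n ≤ b_n^{(2j)}. -/
lemma Tmap_nonneg {ε : ℝ} (hε : 0 < ε) {u : ℕ → ℝ} (hu : ∀ n, 0 ≤ u n) (n : ℕ) :
    0 ≤ Tmap ε u n := by
  cases n with
  | zero => exact div_nonneg hε.le (by linarith [hu 1])
  | succ n =>
    exact div_nonneg (mul_nonneg hε.le (by positivity)) (by linarith [hu n, hu (n+2)])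

lemma Tmap_anti {ε : ℝ} (hε : 0 < ε) {u v : ℕ → ℝ} (hu : ∀ n, 0 ≤ u n)
    (huv : ∀ n, u n ≤ v n) (n : ℕ) : Tmap ε v n ≤ Tmap ε u n := by
  cases n with
  | zero =>
    exact div_le_div_of_nonneg_left hε.le (by linarith [hu 1]) (by linarith [huv 1])
  | succ n =>
    exact div_le_div_of_nonneg_left (mul_nonneg hε.le (by positivity))
      (by linarith [hu n, hu (n+2)]) (by linarith [huv n, huv (n+2)])

lemma bnd_nonneg {ε : ℝ} (hε : 0 < ε) (k : ℕ) : ∀ n, 0 ≤ bnd ε k n := by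
  induction k with
  | zero => intro n; simp [bnd]
  | succ k ih => exact Tmap_nonneg hε ih

lemma bnd_one {ε : ℝ} (n : ℕ) : bnd ε 1 n = ε * ((n : ℝ) + 1) := by
  cases n with
  | zero => simp [bnd, Tmap]
  | succ m =>
    have h : bnd ε 1 (m + 1) = ε * ((m : ℝ) + 2) / (1 + 0 + 0) := rfl
    rw [h]; push_cast; ring

lemma key {ε : ℝ} (hε : 0 < ε) {u : ℕ → ℝ}
    (hu : ∀ n : ℕ, 0 ≤ u n ∧ u n ≤ ε * ((n : ℝ) + 1)) (j : ℕ) :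
    ∀ n, bnd ε (2*j) n ≤ (Tmap ε)^[2*j] u n ∧ (Tmap ε)^[2*j] u n ≤ bnd ε (2*j+1) n := by
  induction j with
  | zero =>
    intro n
    simp only [Nat.mul_zero, Function.iterate_zero, id]
    exact ⟨by simpa [bnd] using (hu n).1, by rw [bnd_one]; exact (hu n).2⟩
  | succ j ih =>
    -- w := (Tmap ε)^[2*j] u
    have hw0 : ∀ n, 0 ≤ (Tmap ε)^[2*j] u n :=
      fun n => le_trans (bnd_nonneg hε _ n) (ih n).1
    -- one application
    have h1 : ∀ n, bnd ε (2*j+2) n ≤ Tmap ε ((Tmap ε)^[2*j] u) n ∧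
        Tmap ε ((Tmap ε)^[2*j] u) n ≤ bnd ε (2*j+1) n := by
      intro n
      constructor
      · exact Tmap_anti hε hw0 (fun m => (ih m).2) n
      · exact Tmap_anti hε (bnd_nonneg hε _) (fun m => (ih m).1) n
    have hw1 : ∀ n, 0 ≤ Tmap ε ((Tmap ε)^[2*j] u) n := Tmap_nonneg hε hw0
    -- second application
    have h2 : ∀ n, bnd ε (2*j+2) n ≤ Tmap ε (Tmap ε ((Tmap ε)^[2*j] u)) n ∧
        Tmap ε (Tmap ε ((Tmap ε)^[2*j] u)) n ≤ bnd ε (2*j+3) n := by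
      intro n
      constructor
      · exact Tmap_anti hε hw1 (fun m => (h1 m).2) n
      · exact Tmap_anti hε (bnd_nonneg hε _) (fun m => (h1 m).1) n
    intro n
    have e : 2*(j+1) = 2*j+1+1 := by ring
    rw [e, Function.iterate_succ_apply', Function.iterate_succ_apply']
    exact ⟨(h2 n).1, (h2 n).2⟩

/-- Bounds on the iterates of `T` applied to any `u ∈ 𝒜⁰`:
`b^{(2j-1)} ≤ T^{2j}u ≤ b^{(2j)}` and `b^{(2j+1)} ≤ T^{2j+1}u ≤ b^{(2j)}`. -/
theorem statement1 (ε : ℝ) (hε : 0 < ε) (u : ℕ → ℝ)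
    (hu : ∀ n : ℕ, 0 ≤ u n ∧ u n ≤ ε * ((n : ℝ) + 1)) (j n : ℕ) :
    (bnd ε (2*j) n ≤ (Tmap ε)^[2*j] u n ∧ (Tmap ε)^[2*j] u n ≤ bnd ε (2*j+1) n) ∧
    (bnd ε (2*j+2) n ≤ (Tmap ε)^[2*j+1] u n ∧ (Tmap ε)^[2*j+1] u n ≤ bnd ε (2*j+1) n) := by
  have ih := key hε hu j
  have hw0 : ∀ n, 0 ≤ (Tmap ε)^[2*j] u n :=
    fun n => le_trans (bnd_nonneg hε _ n) (ih n).1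
  refine ⟨ih n, ?_, ?_⟩
  · rw [Function.iterate_succ_apply']
    exact Tmap_anti hε hw0 (fun m => (ih m).2) n
  · rw [Function.iterate_succ_apply']
    exact Tmap_anti hε (bnd_nonneg hε _) (fun m => (ih m).1) n
end

section
/- For every ε > 0 and every integer j ≥ 0: the sequence (ρ_n^{(2j)})_{n≥0} converges to 1/(j+1) as n → ∞, and the sequence (2ε(n+1)·ρ_n^{(2j+1)})_{n≥0} converges to j+1 as n → ∞ (equivalently, b_n^{(2j+1)} → (j+1)/2 as n → ∞). -/
/-! If `u n ≈ L ε n` then `T(u) n → 1/(2L)`, and if `u n → M` then `T(u) n ≈ ε n / (1 + 2M)`.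
Starting from `ρ^{(0)} ≡ 1` and alternating these two rules, `ρ^{(2j)} → 1/(j+1)` forces
`b^{(2j+1)} → (j+1)/2`, which forces `ρ^{(2j+2)} → 1/(j+2)`. -/

open Filter Topology

theorem tendsto_natCast_add_div_natCast_add (a b : ℝ) :
    Tendsto (fun n : ℕ => ((n : ℝ) + a) / (n + b)) atTop (𝓝 1) := by
  simpa [add_comm] using tendsto_add_mul_div_add_mul_atTop_nhds a b (1 : ℝ) one_ne_zero

theorem tendsto_inv_mul_natCast_add_two {ε : ℝ} (hε : ε ≠ 0) :
    Tendsto (fun n : ℕ => (ε * ((n : ℝ) + 2))⁻¹) atTop (𝓝 0) := by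
  simpa [Function.comp_def, mul_add] using
    (tendsto_mul_add_inv_atTop_nhds_zero ε (ε * 2) hε).comp tendsto_natCast_atTop_atTop

theorem Tmap_succ (ε : ℝ) (u : ℕ → ℝ) (n : ℕ) :
    Tmap ε u (n + 1) = ε * ((n : ℝ) + 2) / (1 + u n + u (n + 2)) := rfl

theorem tendsto_Tmap_of_tendsto_div {ε L : ℝ} (hε : ε ≠ 0) (hL : L ≠ 0) {u : ℕ → ℝ}
    (hu : Tendsto (fun n => u n / (ε * ((n : ℝ) + 1))) atTop (𝓝 L)) :
    Tendsto (Tmap ε u) atTop (𝓝 (2 * L)⁻¹) := by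
  have hsum := ((tendsto_inv_mul_natCast_add_two hε).add
      (hu.mul (tendsto_natCast_add_div_natCast_add 1 2))).add
      ((hu.comp (tendsto_add_atTop_nat 2)).mul (tendsto_natCast_add_div_natCast_add 3 2))
  rw [zero_add, mul_one, ← two_mul] at hsum
  have hden : Tendsto (fun n : ℕ => (1 + u n + u (n + 2)) / (ε * ((n : ℝ) + 2)))
      atTop (𝓝 (2 * L)) := by
    refine hsum.congr fun n => ?_
    simp only [Function.comp_apply]
    push_cast
    field_simp
    ring
  rw [← tendsto_add_atTop_iff_nat 1]
  simpa only [Tmap_succ, inv_div] using hden.inv₀ (mul_ne_zero two_ne_zero hL)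

theorem tendsto_Tmap_div_of_tendsto {ε M : ℝ} (hε : ε ≠ 0) (hM : 1 + 2 * M ≠ 0) {u : ℕ → ℝ}
    (hu : Tendsto u atTop (𝓝 M)) :
    Tendsto (fun n => Tmap ε u n / (ε * ((n : ℝ) + 1))) atTop (𝓝 (1 + 2 * M)⁻¹) := by
  have hden := (hu.const_add 1).add (hu.comp (tendsto_add_atTop_nat 2))
  rw [add_assoc, ← two_mul] at hden
  rw [← tendsto_add_atTop_iff_nat 1]
  refine (hden.inv₀ hM).congr fun n => ?_
  have hn : ε * ((n : ℝ) + 2) ≠ 0 := mul_ne_zero hε (by positivity)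
  rw [Tmap_succ, Nat.cast_succ, add_assoc (n : ℝ), one_add_one_eq_two, div_div,
    div_mul_cancel_right₀ hn, Function.comp_apply]

theorem rho_one {ε : ℝ} (hε : ε ≠ 0) (n : ℕ) : rho ε 1 n = 1 := by
  cases n with
  | zero => simp [rho, bnd, Tmap, hε]
  | succ n =>
    have hn : ε * ((n : ℝ) + 1 + 1) ≠ 0 := mul_ne_zero hε (by positivity)
    simp only [rho, bnd, Tmap_succ, add_zero, div_one, Nat.cast_succ]
    rw [add_assoc, one_add_one_eq_two] at hn ⊢
    exact div_self hn

section

variable {ε : ℝ} (hε : ε ≠ 0)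
include hε

theorem tendsto_bnd_two_mul_add_two_of_tendsto_rho {j : ℕ}
    (h : Tendsto (rho ε (2 * j + 1)) atTop (𝓝 ((j : ℝ) + 1)⁻¹)) :
    Tendsto (bnd ε (2 * j + 2)) atTop (𝓝 (((j : ℝ) + 1) / 2)) := by
  have := tendsto_Tmap_of_tendsto_div hε (inv_ne_zero (Nat.cast_add_one_ne_zero j)) h
  rwa [mul_inv, inv_inv, inv_mul_eq_div] at this

theorem tendsto_rho_two_mul_add_one (j : ℕ) :
    Tendsto (rho ε (2 * j + 1)) atTop (𝓝 ((j : ℝ) + 1)⁻¹) := by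
  induction j with
  | zero => simp [funext (rho_one hε)]
  | succ j ih =>
    have hM : 1 + 2 * (((j : ℝ) + 1) / 2) ≠ 0 := by positivity
    have hlim : (1 + 2 * (((j : ℝ) + 1) / 2))⁻¹ = (((j + 1 : ℕ) : ℝ) + 1)⁻¹ := by
      push_cast
      ring
    rw [← hlim]
    exact tendsto_Tmap_div_of_tendsto hε hM (tendsto_bnd_two_mul_add_two_of_tendsto_rho hε ih)

end

/-- Asymptotics in `n`: `ρ_n^{(2j)} → 1/(j+1)` and `2ε(n+1)ρ_n^{(2j+1)} → j+1`
(equivalently `b_n^{(2j+1)} → (j+1)/2`) as `n → ∞`. -/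
theorem statement5 (ε : ℝ) (hε : 0 < ε) (j : ℕ) :
    Filter.Tendsto (fun n : ℕ => rho ε (2*j+1) n) Filter.atTop (nhds (1 / ((j : ℝ) + 1))) ∧
    Filter.Tendsto (fun n : ℕ => 2 * ε * ((n : ℝ) + 1) * rho ε (2*j+2) n)
      Filter.atTop (nhds ((j : ℝ) + 1)) ∧
    Filter.Tendsto (fun n : ℕ => bnd ε (2*j+2) n) Filter.atTop (nhds (((j : ℝ) + 1) / 2)) := by
  have hε₀ := hε.ne'
  have hrho := tendsto_rho_two_mul_add_one hε₀ j
  have hbnd := tendsto_bnd_two_mul_add_two_of_tendsto_rho hε₀ hrho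
  refine ⟨by simpa only [one_div] using hrho, ?_, hbnd⟩
  have hscale : ∀ n : ℕ, 2 * ε * ((n : ℝ) + 1) * rho ε (2 * j + 2) n = 2 * bnd ε (2 * j + 2) n :=
    fun n => by
      rw [rho]
      field_simp
  simp only [hscale]
  convert hbnd.const_mul 2 using 2
  ring
end

section
/- Define coefficients c_n^{(k)} by c_n^{(0)} = 1 for all n ≥ 0 and c_n^{(k+1)} = n c_{n-1}^{(k)} + (n+2) c_{n+1}^{(k)} for all k, n ≥ 0 (the term n c_{n-1}^{(k)} vanishing when n = 0). Then for every integer k ≥ 0 and every n ≥ 0, the quotient Δ_n^{(k)}(ε)/ε^k tends to c_n^{(k)} as ε → 0⁺; i.e. the leading part of the expansion of Δ_n^{(k)} at ε = 0 is c_n^{(k)} ε^k (1 + O(ε)). -/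
/-- The coefficients `c_n^{(k)}`: `c_n^{(0)} = 1` and
`c_n^{(k+1)} = n c_{n-1}^{(k)} + (n+2) c_{n+1}^{(k)}` (the first term vanishing for `n = 0`). -/
noncomputable def cc : ℕ → ℕ → ℝ
  | 0, _ => 1
  | (k+1), n => (n : ℝ) * cc k (n-1) + ((n : ℝ) + 2) * cc k (n+1)

/-!
Writing `b_n^{(k-1)} = ε(n+1) ρ_n^{(k-1)}`, the definition of `T` becomes
`ρ^{(k)} = 1 / (1 + ε L ρ^{(k-1)})` with the linear operator `(L r)_n = n r_{n-1} + (n+2) r_{n+1}`,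
the same operator that defines `c^{(k+1)} = L c^{(k)}`. Subtracting two consecutive instances gives
`Δ^{(k+1)} = ε L Δ^{(k)} / ((1 + ε L ρ^{(k-1)}) (1 + ε L ρ^{(k)}))`, and since all `ρ` lie in `[0, 1]`
the denominator tends to `1`.
-/

open Filter Topology

/-- The operator `L`; at `n = 0` the truncated index `n - 1` is harmless because its coefficient
vanishes. -/
noncomputable def neighborSum (r : ℕ → ℝ) (n : ℕ) : ℝ :=
  n * r (n - 1) + (n + 2) * r (n + 1)

lemma cc_succ (k n : ℕ) : cc (k + 1) n = neighborSum (cc k) n := rfl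

lemma neighborSum_const_mul (c : ℝ) (r : ℕ → ℝ) (n : ℕ) :
    neighborSum (fun j => c * r j) n = c * neighborSum r n := by
  simp only [neighborSum]; ring

lemma neighborSum_sub (r s : ℕ → ℝ) (n : ℕ) :
    neighborSum (fun j => r j - s j) n = neighborSum r n - neighborSum s n := by
  simp only [neighborSum]; ring

lemma neighborSum_nonneg {r : ℕ → ℝ} (hr : ∀ j, 0 ≤ r j) (n : ℕ) : 0 ≤ neighborSum r n := by
  unfold neighborSum
  have := hr (n - 1)
  have := hr (n + 1)
  positivity

lemma neighborSum_le {r : ℕ → ℝ} (hr : ∀ j, r j ≤ 1) (n : ℕ) :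
    neighborSum r n ≤ 2 * n + 2 := by
  unfold neighborSum
  have h₁ := mul_le_mul_of_nonneg_left (hr (n - 1)) (Nat.cast_nonneg n)
  have h₂ := mul_le_mul_of_nonneg_left (hr (n + 1)) (by positivity : (0 : ℝ) ≤ n + 2)
  linarith

lemma tendsto_neighborSum {α : Type*} {l : Filter α} {f : α → ℕ → ℝ} {c : ℕ → ℝ}
    (hf : ∀ j, Tendsto (fun x => f x j) l (𝓝 (c j))) (n : ℕ) :
    Tendsto (fun x => neighborSum (f x) n) l (𝓝 (neighborSum c n)) :=
  (tendsto_const_nhds.mul (hf (n - 1))).add (tendsto_const_nhds.mul (hf (n + 1)))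

lemma Tmap_mul_eq (ε : ℝ) (r : ℕ → ℝ) (n : ℕ) :
    Tmap ε (fun j => ε * (j + 1) * r j) n = ε * (n + 1) / (1 + ε * neighborSum r n) := by
  cases n <;> simp only [Tmap, neighborSum] <;> push_cast <;> ring

lemma bnd_eq_mul_rho {ε : ℝ} (hε : ε ≠ 0) (k n : ℕ) : bnd ε k n = ε * (n + 1) * rho ε k n := by
  rw [rho, mul_div_cancel₀]
  positivity

lemma rho_zero (ε : ℝ) (n : ℕ) : rho ε 0 n = 0 := by
  simp [rho, bnd]

lemma rho_succ {ε : ℝ} (hε : ε ≠ 0) (k n : ℕ) :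
    rho ε (k + 1) n = 1 / (1 + ε * neighborSum (rho ε k) n) := by
  have hb : bnd ε k = fun j => ε * (j + 1) * rho ε k j := funext (bnd_eq_mul_rho hε k)
  rw [rho, bnd, hb, Tmap_mul_eq, div_right_comm, div_self (by positivity)]

lemma rho_mem_Icc {ε : ℝ} (hε : 0 < ε) (k n : ℕ) : rho ε k n ∈ Set.Icc 0 1 := by
  induction k generalizing n with
  | zero => simp [rho_zero]
  | succ k ih =>
    rw [rho_succ hε.ne']
    have : 0 ≤ ε * neighborSum (rho ε k) n :=
      mul_nonneg hε.le (neighborSum_nonneg (fun j => (ih j).1) n)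
    exact ⟨by positivity, div_le_one_of_le₀ (by linarith) (by positivity)⟩

lemma tendsto_mul_neighborSum_rho (k n : ℕ) :
    Tendsto (fun ε => ε * neighborSum (rho ε k) n) (𝓝[>] 0) (𝓝 0) := by
  have hε : Tendsto (fun ε : ℝ => ε) (𝓝[>] 0) (𝓝 0) := nhdsWithin_le_nhds
  have hupper : Tendsto (fun ε : ℝ => ε * (2 * n + 2)) (𝓝[>] 0) (𝓝 0) := by
    simpa using hε.mul_const (2 * (n : ℝ) + 2)
  refine tendsto_of_tendsto_of_tendsto_of_le_of_le' tendsto_const_nhds hupper ?_ ?_ <;>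
    filter_upwards [self_mem_nhdsWithin] with ε (hε : 0 < ε)
  · have := neighborSum_nonneg (fun j => (rho_mem_Icc hε k j).1) n
    positivity
  · exact mul_le_mul_of_nonneg_left
      (neighborSum_le (fun j => (rho_mem_Icc hε k j).2) n) hε.le

lemma Δd_succ {ε : ℝ} (hε : 0 < ε) (k n : ℕ) :
    Δd ε (k + 1) n = ε * neighborSum (Δd ε k) n /
      ((1 + ε * neighborSum (rho ε k) n) * (1 + ε * neighborSum (rho ε (k + 1)) n)) := by
  have h₀ := neighborSum_nonneg (fun j => (rho_mem_Icc hε k j).1) n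
  have h₁ := neighborSum_nonneg (fun j => (rho_mem_Icc hε (k + 1) j).1) n
  have hL : neighborSum (Δd ε k) n =
      (-1) ^ k * (neighborSum (rho ε (k + 1)) n - neighborSum (rho ε k) n) := by
    rw [← neighborSum_sub, ← neighborSum_const_mul]
    rfl
  rw [hL, Δd, rho_succ hε.ne', rho_succ hε.ne']
  field_simp
  ring

/-- The leading part of the expansion of `Δ_n^{(k)}` at `ε = 0` is `c_n^{(k)} ε^k (1 + O(ε))`:
`Δ_n^{(k)}(ε)/ε^k → c_n^{(k)}` as `ε → 0⁺`. -/
theorem statement10 (k n : ℕ) :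
    Filter.Tendsto (fun ε : ℝ => Δd ε k n / ε^k) (nhdsWithin 0 (Set.Ioi 0))
      (nhds (cc k n)) := by
  induction k generalizing n with
  | zero =>
    refine tendsto_const_nhds.congr' ?_
    filter_upwards [self_mem_nhdsWithin] with ε (hε : 0 < ε)
    simp [Δd, rho_succ hε.ne', rho_zero, neighborSum, cc]
  | succ k ih =>
    have hden (j : ℕ) : Tendsto (fun ε => 1 + ε * neighborSum (rho ε j) n) (𝓝[>] 0) (𝓝 1) := by
      simpa using (tendsto_mul_neighborSum_rho j n).const_add 1
    have hlim := (tendsto_neighborSum ih n).div ((hden k).mul (hden (k + 1))) (by norm_num)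
    rw [mul_one, div_one, ← cc_succ] at hlim
    refine hlim.congr' ?_
    filter_upwards [self_mem_nhdsWithin] with ε (hε : 0 < ε)
    have hrescale : neighborSum (fun j => Δd ε k j / ε ^ k) n = neighborSum (Δd ε k) n / ε ^ k := by
      simp only [div_eq_inv_mul, neighborSum_const_mul]
    rw [Pi.div_apply, hrescale, Δd_succ hε]
    field_simp
    ring
end

section
/- Let ε > 0 and suppose that for all n ≥ 0 and all integers j ≥ 1 the inequalities ρ_n^{(2j-1)} ρ_n^{(2j-2)} < 1/(2ε(n+1)) and ρ_n^{(2j)} ρ_n^{(2j-1)} < j/(2ε(n+1)(j+1)) hold. Then there is exactly one v₀ > 0 such that the sequence (vₙ)_{n ≥ -1} with v₋₁ = 0 and vₙ(v_{n+1} + v_{n-1} + 1) = ε(n+1) for all n ≥ 0 satisfies vₙ > 0 for all n ≥ 0. -/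
namespace DP1

/-- neighbor sum -/
def Ssum (u : ℕ → ℝ) : ℕ → ℝ
  | 0 => u 1
  | (n+1) => u n + u (n+2)

lemma Tmap_eq (ε : ℝ) (u : ℕ → ℝ) : ∀ n, Tmap ε u n = ε * ((n:ℝ)+1) / (1 + Ssum u n)
  | 0 => by simp [Tmap, Ssum]
  | (n+1) => by simp only [Tmap, Ssum]; push_cast; ring_nf

lemma Ssum_nonneg {u : ℕ → ℝ} (hu : ∀ n, 0 ≤ u n) (n : ℕ) : 0 ≤ Ssum u n := by
  cases n with
  | zero => exact hu 1
  | succ m => exact add_nonneg (hu m) (hu (m+2))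

lemma Ssum_mono {u v : ℕ → ℝ} (huv : ∀ n, u n ≤ v n) (n : ℕ) : Ssum u n ≤ Ssum v n := by
  cases n with
  | zero => exact huv 1
  | succ m => exact add_le_add (huv m) (huv (m+2))

lemma Tmap_pos {ε : ℝ} (hε : 0 < ε) {u : ℕ → ℝ} (hu : ∀ n, 0 ≤ u n) (n : ℕ) :
    0 < Tmap ε u n := by
  rw [Tmap_eq]
  apply div_pos (by positivity)
  linarith [Ssum_nonneg hu n]

lemma Tmap_anti {ε : ℝ} (hε : 0 < ε) {u v : ℕ → ℝ} (hu : ∀ n, 0 ≤ u n)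
    (huv : ∀ n, u n ≤ v n) (n : ℕ) : Tmap ε v n ≤ Tmap ε u n := by
  rw [Tmap_eq, Tmap_eq]
  have h1 : (0:ℝ) < 1 + Ssum u n := by linarith [Ssum_nonneg hu n]
  have h2 : Ssum u n ≤ Ssum v n := Ssum_mono huv n
  gcongr

lemma bnd_nonneg {ε : ℝ} (hε : 0 < ε) : ∀ k n, 0 ≤ bnd ε k n
  | 0, n => le_refl 0
  | (k+1), n => (Tmap_pos hε (bnd_nonneg hε k) n).le

lemma bnd_pos {ε : ℝ} (hε : 0 < ε) (k n : ℕ) : 0 < bnd ε (k+1) n :=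
  Tmap_pos hε (bnd_nonneg hε k) n

lemma bnd_succ (ε : ℝ) (k : ℕ) : bnd ε (k+1) = Tmap ε (bnd ε k) := rfl

lemma bnd_le_lin {ε : ℝ} (hε : 0 < ε) (k n : ℕ) : bnd ε (k+1) n ≤ ε * ((n:ℝ)+1) := by
  rw [bnd_succ, Tmap_eq]
  have h1 : (0:ℝ) ≤ Ssum (bnd ε k) n := Ssum_nonneg (bnd_nonneg hε k) n
  have h2 : (0:ℝ) ≤ ε * ((n:ℝ)+1) := by positivity
  calc ε * ((n:ℝ)+1) / (1 + Ssum (bnd ε k) n) ≤ ε * ((n:ℝ)+1) / 1 := by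
        gcongr
        linarith
    _ = ε * ((n:ℝ)+1) := div_one _

lemma rho_nonneg {ε : ℝ} (hε : 0 < ε) (k n : ℕ) : 0 ≤ rho ε k n := by
  have h2 : (0:ℝ) < ε * ((n:ℝ)+1) := by positivity
  exact div_nonneg (bnd_nonneg hε k n) h2.le

lemma rho_zero (ε : ℝ) (n : ℕ) : rho ε 0 n = 0 := by simp [rho, bnd]

lemma rho_one {ε : ℝ} (hε : 0 < ε) (n : ℕ) : rho ε 1 n = 1 := by
  have h1 : bnd ε 1 n = ε * ((n:ℝ)+1) := by
    rw [bnd_succ, Tmap_eq]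
    have h : Ssum (bnd ε 0) n = 0 := by cases n <;> simp [Ssum, bnd]
    rw [h]; simp
  have h2 : (ε * ((n:ℝ)+1)) ≠ 0 := by positivity
  rw [rho, h1, div_self h2]


lemma adj {ε : ℝ} (hε : 0 < ε) : ∀ k n, bnd ε (2*k) n ≤ bnd ε (2*k+1) n := by
  intro k
  induction k with
  | zero => intro n; exact (bnd_pos hε 0 n).le
  | succ k ih =>
    have h2 : ∀ n, bnd ε (2*k+2) n ≤ bnd ε (2*k+1) n :=
      Tmap_anti hε (bnd_nonneg hε (2*k)) ih
    exact fun n => Tmap_anti hε (bnd_nonneg hε (2*k+2)) h2 n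

lemma evenStep {ε : ℝ} (hε : 0 < ε) : ∀ k n, bnd ε (2*k) n ≤ bnd ε (2*k+2) n := by
  intro k
  induction k with
  | zero => intro n; exact bnd_nonneg hε 2 n
  | succ k ih =>
    have h2 : ∀ n, bnd ε (2*k+3) n ≤ bnd ε (2*k+1) n :=
      Tmap_anti hε (bnd_nonneg hε (2*k)) ih
    exact fun n => Tmap_anti hε (bnd_nonneg hε (2*k+3)) h2 n

lemma oddStep {ε : ℝ} (hε : 0 < ε) (k n : ℕ) : bnd ε (2*k+3) n ≤ bnd ε (2*k+1) n :=
  Tmap_anti hε (bnd_nonneg hε (2*k)) (evenStep hε k) n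

lemma evenMono {ε : ℝ} (hε : 0 < ε) {k l : ℕ} (hkl : k ≤ l) (n : ℕ) :
    bnd ε (2*k) n ≤ bnd ε (2*l) n := by
  induction l, hkl using Nat.le_induction with
  | base => exact le_refl _
  | succ l hl ih => exact le_trans ih (evenStep hε l n)

lemma oddAnti {ε : ℝ} (hε : 0 < ε) {k l : ℕ} (hkl : k ≤ l) (n : ℕ) :
    bnd ε (2*l+1) n ≤ bnd ε (2*k+1) n := by
  induction l, hkl using Nat.le_induction with
  | base => exact le_refl _
  | succ l hl ih => exact le_trans (oddStep hε l n) ih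

lemma cross {ε : ℝ} (hε : 0 < ε) (k l n : ℕ) : bnd ε (2*k) n ≤ bnd ε (2*l+1) n := by
  calc bnd ε (2*k) n ≤ bnd ε (2*(max k l)) n := evenMono hε (le_max_left k l) n
    _ ≤ bnd ε (2*(max k l)+1) n := adj hε (max k l) n
    _ ≤ bnd ε (2*l+1) n := oddAnti hε (le_max_right k l) n

lemma sandwich {ε : ℝ} (hε : 0 < ε) {u : ℕ → ℝ} (hu : ∀ n, 0 ≤ u n)
    (hfix : ∀ n, u n = Tmap ε u n) :
    ∀ k, (∀ n, bnd ε (2*k) n ≤ u n) ∧ (∀ n, u n ≤ bnd ε (2*k+1) n) := by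
  intro k
  induction k with
  | zero =>
    refine ⟨fun n => hu n, fun n => ?_⟩
    rw [hfix n]
    exact Tmap_anti hε (fun _ => le_refl 0) hu n
  | succ k ih =>
    obtain ⟨h1, h2⟩ := ih
    have h3 : ∀ n, bnd ε (2*k+2) n ≤ u n := by
      intro n
      have := Tmap_anti hε hu h2 n
      rwa [← hfix n] at this
    refine ⟨h3, fun n => ?_⟩
    have := Tmap_anti hε (bnd_nonneg hε (2*k+2)) h3 n
    rwa [← hfix n] at this

lemma rho_succ {ε : ℝ} (hε : 0 < ε) (k n : ℕ) :
    rho ε (k+1) n = 1 / (1 + Ssum (bnd ε k) n) := by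
  have hA : (0:ℝ) < 1 + Ssum (bnd ε k) n := by
    linarith [Ssum_nonneg (bnd_nonneg hε k) n]
  have hE : (0:ℝ) < ε * ((n:ℝ)+1) := by positivity
  rw [rho, bnd_succ, Tmap_eq]
  field_simp

lemma bnd_eq_rho {ε : ℝ} (hε : 0 < ε) (k n : ℕ) :
    bnd ε k n = rho ε k n * (ε * ((n:ℝ)+1)) := by
  have hE : (0:ℝ) < ε * ((n:ℝ)+1) := by positivity
  rw [rho]
  field_simp

lemma diff_bound {ε : ℝ} (hε : 0 < ε) (k : ℕ) (c : ℝ)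
    (hd : ∀ m, |rho ε (k+1) m - rho ε k m| ≤ c) (n : ℕ) :
    |rho ε (k+2) n - rho ε (k+1) n| ≤
      2 * (ε * ((n:ℝ)+1)) * c * (rho ε (k+2) n * rho ε (k+1) n) := by
  have hA : (0:ℝ) < 1 + Ssum (bnd ε k) n := by
    linarith [Ssum_nonneg (bnd_nonneg hε k) n]
  have hB : (0:ℝ) < 1 + Ssum (bnd ε (k+1)) n := by
    linarith [Ssum_nonneg (bnd_nonneg hε (k+1)) n]
  set A := 1 + Ssum (bnd ε k) n with hAdef
  set B := 1 + Ssum (bnd ε (k+1)) n with hBdef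
  have r1 : rho ε (k+1) n = 1/A := rho_succ hε k n
  have r2 : rho ε (k+2) n = 1/B := rho_succ hε (k+1) n
  have hAB : |A - B| ≤ 2 * (ε * ((n:ℝ)+1)) * c := by
    cases n with
    | zero =>
      have e : A - B = (rho ε k 1 - rho ε (k+1) 1) * (ε * 2) := by
        rw [hAdef, hBdef]
        show (1 + bnd ε k 1) - (1 + bnd ε (k+1) 1) = _
        rw [bnd_eq_rho hε k 1, bnd_eq_rho hε (k+1) 1]
        push_cast
        ring
      rw [e, abs_mul, abs_sub_comm, abs_of_pos (by positivity : (0:ℝ) < ε * 2)]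
      have := hd 1
      push_cast
      nlinarith [abs_nonneg (rho ε (k+1) 1 - rho ε k 1)]
    | succ m =>
      have e : A - B = (rho ε k m - rho ε (k+1) m) * (ε * ((m:ℝ)+1))
          + (rho ε k (m+2) - rho ε (k+1) (m+2)) * (ε * ((m:ℝ)+3)) := by
        rw [hAdef, hBdef]
        show (1 + (bnd ε k m + bnd ε k (m+2))) - (1 + (bnd ε (k+1) m + bnd ε (k+1) (m+2))) = _
        rw [bnd_eq_rho hε k m, bnd_eq_rho hε (k+1) m,
          bnd_eq_rho hε k (m+2), bnd_eq_rho hε (k+1) (m+2)]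
        push_cast
        ring
      have t1 := hd m
      have t2 := hd (m+2)
      rw [abs_sub_comm] at t1 t2
      have hc : 0 ≤ c := le_trans (abs_nonneg _) t1
      have p1 : (0:ℝ) < ε * ((m:ℝ)+1) := by positivity
      have p2 : (0:ℝ) < ε * ((m:ℝ)+3) := by positivity
      have b1 : |(rho ε k m - rho ε (k+1) m) * (ε * ((m:ℝ)+1))| ≤ c * (ε * ((m:ℝ)+1)) := by
        rw [abs_mul, abs_of_pos p1]
        exact mul_le_mul_of_nonneg_right t1 p1.le
      have b2 : |(rho ε k (m+2) - rho ε (k+1) (m+2)) * (ε * ((m:ℝ)+3))|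
          ≤ c * (ε * ((m:ℝ)+3)) := by
        rw [abs_mul, abs_of_pos p2]
        exact mul_le_mul_of_nonneg_right t2 p2.le
      calc |A - B| ≤ |(rho ε k m - rho ε (k+1) m) * (ε * ((m:ℝ)+1))|
            + |(rho ε k (m+2) - rho ε (k+1) (m+2)) * (ε * ((m:ℝ)+3))| := by
            rw [e]; exact abs_add_le _ _
        _ ≤ c * (ε * ((m:ℝ)+1)) + c * (ε * ((m:ℝ)+3)) := add_le_add b1 b2
        _ = 2 * (ε * ((((m+1):ℕ):ℝ)+1)) * c := by push_cast; ring
  rw [r1, r2]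
  have e2 : 1/B - 1/A = (A - B) / (A * B) := by
    rw [div_sub_div _ _ hB.ne' hA.ne', one_mul, mul_one, mul_comm B A]
  rw [e2, abs_div, abs_of_pos (by positivity : (0:ℝ) < A * B)]
  have e3 : 2 * (ε * ((n:ℝ)+1)) * c * (1/B * (1/A))
      = (2 * (ε * ((n:ℝ)+1)) * c) / (A * B) := by
    rw [div_mul_div_comm, one_mul, mul_one_div, mul_comm A B]
  rw [e3]
  gcongr

def Hyp (ε : ℝ) : Prop := ∀ n j : ℕ, 1 ≤ j →
  rho ε (2*j) n * rho ε (2*j-1) n < 1 / (2 * ε * ((n : ℝ) + 1)) ∧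
  rho ε (2*j+1) n * rho ε (2*j) n < (j : ℝ) / (2 * ε * ((n : ℝ) + 1) * ((j : ℝ) + 1))

lemma stepA {ε : ℝ} (hε : 0 < ε) (h : Hyp ε) (j : ℕ) (c : ℝ) (hc : 0 ≤ c)
    (hd : ∀ m, |rho ε (2*j+1) m - rho ε (2*j) m| ≤ c) (n : ℕ) :
    |rho ε (2*j+2) n - rho ε (2*j+1) n| ≤ c := by
  have hE : (0:ℝ) < ε * ((n:ℝ)+1) := by positivity
  have key := diff_bound hε (2*j) c hd n
  have hh := (h n (j+1) (by omega)).1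
  rw [(by omega : 2*(j+1)-1 = 2*j+1), (by omega : 2*(j+1) = 2*j+2)] at hh
  have hP : rho ε (2*j+2) n * rho ε (2*j+1) n ≤ 1 / (2 * (ε * ((n:ℝ)+1))) := by
    have e : 2 * ε * ((n:ℝ)+1) = 2 * (ε * ((n:ℝ)+1)) := by ring
    rw [e] at hh
    exact hh.le
  calc |rho ε (2*j+2) n - rho ε (2*j+1) n|
      ≤ 2 * (ε * ((n:ℝ)+1)) * c * (rho ε (2*j+2) n * rho ε (2*j+1) n) := key
    _ ≤ 2 * (ε * ((n:ℝ)+1)) * c * (1 / (2 * (ε * ((n:ℝ)+1)))) := by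
        gcongr
    _ = c := by field_simp

lemma stepB {ε : ℝ} (hε : 0 < ε) (h : Hyp ε) (j : ℕ) (c : ℝ) (hc : 0 ≤ c)
    (hd : ∀ m, |rho ε (2*j+2) m - rho ε (2*j+1) m| ≤ c) (n : ℕ) :
    |rho ε (2*j+3) n - rho ε (2*j+2) n| ≤ c * (((j:ℝ)+1) / ((j:ℝ)+2)) := by
  have hE : (0:ℝ) < ε * ((n:ℝ)+1) := by positivity
  have key := diff_bound hε (2*j+1) c hd n
  have hh := (h n (j+1) (by omega)).2
  rw [(by omega : 2*(j+1) = 2*j+2)] at hh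
  push_cast at hh
  have hP : rho ε (2*j+3) n * rho ε (2*j+2) n
      ≤ ((j:ℝ)+1) / (2 * (ε * ((n:ℝ)+1)) * ((j:ℝ)+2)) := by
    have e : 2 * ε * ((n:ℝ)+1) * ((j:ℝ)+1+1) = 2 * (ε * ((n:ℝ)+1)) * ((j:ℝ)+2) := by ring
    rw [e] at hh
    exact le_of_lt (by exact_mod_cast hh)
  calc |rho ε (2*j+3) n - rho ε (2*j+2) n|
      ≤ 2 * (ε * ((n:ℝ)+1)) * c * (rho ε (2*j+3) n * rho ε (2*j+2) n) := key
    _ ≤ 2 * (ε * ((n:ℝ)+1)) * c * (((j:ℝ)+1) / (2 * (ε * ((n:ℝ)+1)) * ((j:ℝ)+2))) := by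
        gcongr
    _ = c * (((j:ℝ)+1) / ((j:ℝ)+2)) := by
        have : ((j:ℝ)+2) ≠ 0 := by positivity
        field_simp

lemma decay {ε : ℝ} (hε : 0 < ε) (h : Hyp ε) :
    ∀ j n, |rho ε (2*j+1) n - rho ε (2*j) n| ≤ 1 / ((j:ℝ)+1) := by
  intro j
  induction j with
  | zero =>
    intro n
    norm_num [rho_one hε, rho_zero]
  | succ j ih =>
    intro n
    push_cast
    have hc : (0:ℝ) ≤ 1 / ((j:ℝ)+1) := by positivity
    have a := stepA hε h j _ hc ih
    have b := stepB hε h j _ hc a n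
    show |rho ε (2*j+3) n - rho ε (2*j+2) n| ≤ 1 / ((j:ℝ)+1+1)
    refine le_trans b (le_of_eq ?_)
    have h1 : ((j:ℝ)+1) ≠ 0 := by positivity
    have h2 : ((j:ℝ)+2) ≠ 0 := by positivity
    field_simp
    ring

lemma gap {ε : ℝ} (hε : 0 < ε) (h : Hyp ε) (j n : ℕ) :
    bnd ε (2*j+1) n - bnd ε (2*j) n ≤ (ε * ((n:ℝ)+1)) / ((j:ℝ)+1) := by
  have hE : (0:ℝ) < ε * ((n:ℝ)+1) := by positivity
  have hd := decay hε h j n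
  rw [bnd_eq_rho hε (2*j+1) n, bnd_eq_rho hε (2*j) n]
  have : rho ε (2*j+1) n - rho ε (2*j) n ≤ 1 / ((j:ℝ)+1) :=
    le_trans (le_abs_self _) hd
  calc rho ε (2*j+1) n * (ε * ((n:ℝ)+1)) - rho ε (2*j) n * (ε * ((n:ℝ)+1))
      = (rho ε (2*j+1) n - rho ε (2*j) n) * (ε * ((n:ℝ)+1)) := by ring
    _ ≤ (1 / ((j:ℝ)+1)) * (ε * ((n:ℝ)+1)) := mul_le_mul_of_nonneg_right this hE.le
    _ = (ε * ((n:ℝ)+1)) / ((j:ℝ)+1) := by ring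

lemma eq_of_squeeze {ε : ℝ} (hε : 0 < ε) (h : Hyp ε) {x y : ℝ} (n : ℕ)
    (hx : ∀ j, bnd ε (2*j) n ≤ x ∧ x ≤ bnd ε (2*j+1) n)
    (hy : ∀ j, bnd ε (2*j) n ≤ y ∧ y ≤ bnd ε (2*j+1) n) : x = y := by
  have hE : (0:ℝ) < ε * ((n:ℝ)+1) := by positivity
  by_contra hne
  have hδ : 0 < |x - y| := abs_pos.mpr (sub_ne_zero.mpr hne)
  obtain ⟨j, hj⟩ := exists_nat_gt ((ε * ((n:ℝ)+1)) / |x - y|)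
  have h1 : |x - y| ≤ bnd ε (2*j+1) n - bnd ε (2*j) n := by
    obtain ⟨a1, a2⟩ := hx j
    obtain ⟨b1, b2⟩ := hy j
    rw [abs_sub_le_iff]
    constructor <;> linarith
  have h2 : ε * ((n:ℝ)+1) < (j:ℝ) * |x - y| := (div_lt_iff₀ hδ).mp hj
  have h3 : (ε * ((n:ℝ)+1)) / ((j:ℝ)+1) < |x - y| := by
    rw [div_lt_iff₀ (by positivity)]
    nlinarith
  have h4 := gap hε h j n
  linarith

noncomputable def vlim (ε : ℝ) (n : ℕ) : ℝ := ⨆ k, bnd ε (2*k) n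

lemma vlim_bdd {ε : ℝ} (hε : 0 < ε) (n : ℕ) :
    BddAbove (Set.range fun k => bnd ε (2*k) n) := by
  refine ⟨bnd ε 1 n, ?_⟩
  rintro x ⟨k, rfl⟩
  exact cross hε k 0 n

lemma vlim_ge {ε : ℝ} (hε : 0 < ε) (k n : ℕ) : bnd ε (2*k) n ≤ vlim ε n :=
  le_ciSup (vlim_bdd hε n) k

lemma vlim_le {ε : ℝ} (hε : 0 < ε) (l n : ℕ) : vlim ε n ≤ bnd ε (2*l+1) n :=
  ciSup_le (fun k => cross hε k l n)

lemma vlim_nonneg {ε : ℝ} (hε : 0 < ε) (n : ℕ) : 0 ≤ vlim ε n :=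
  le_trans (le_of_eq rfl) (vlim_ge hε 0 n)

lemma vlim_pos {ε : ℝ} (hε : 0 < ε) (n : ℕ) : 0 < vlim ε n :=
  lt_of_lt_of_le (bnd_pos hε 1 n) (vlim_ge hε 1 n)

lemma vlim_sandwich {ε : ℝ} (hε : 0 < ε) (j n : ℕ) :
    bnd ε (2*j) n ≤ vlim ε n ∧ vlim ε n ≤ bnd ε (2*j+1) n :=
  ⟨vlim_ge hε j n, vlim_le hε j n⟩

lemma vlim_fix {ε : ℝ} (hε : 0 < ε) (h : Hyp ε) (n : ℕ) :
    vlim ε n = Tmap ε (vlim ε) n := by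
  apply eq_of_squeeze hε h n (fun j => vlim_sandwich hε j n)
  intro j
  constructor
  · calc bnd ε (2*j) n ≤ bnd ε (2*j+2) n := evenStep hε j n
      _ ≤ Tmap ε (vlim ε) n :=
        Tmap_anti hε (vlim_nonneg hε) (fun m => vlim_le hε j m) n
  · exact Tmap_anti hε (bnd_nonneg hε (2*j)) (fun m => vlim_ge hε j m) n

lemma fix_eq {ε : ℝ} (hε : 0 < ε) {u : ℕ → ℝ} (hu : ∀ n, 0 ≤ u n)
    (hfix : ∀ n, u n = Tmap ε u n) (n : ℕ) :
    u n * (1 + Ssum u n) = ε * ((n:ℝ)+1) := by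
  have hA : (0:ℝ) < 1 + Ssum u n := by linarith [Ssum_nonneg hu n]
  rw [hfix n, Tmap_eq]
  field_simp

end DP1

/-- Conditional uniqueness: if the products of consecutive rescaled bounds satisfy the
conjectured inequalities, then there is exactly one `v₀ > 0` giving a positive solution
of the dP_I initial value problem.  Here `v m` denotes `v_{m-1}`. -/


theorem statement11 (ε : ℝ) (hε : 0 < ε)
    (h : ∀ n j : ℕ, 1 ≤ j →
      rho ε (2*j) n * rho ε (2*j-1) n < 1 / (2 * ε * ((n : ℝ) + 1)) ∧
      rho ε (2*j+1) n * rho ε (2*j) n <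
        (j : ℝ) / (2 * ε * ((n : ℝ) + 1) * ((j : ℝ) + 1))) :
    ∃! v0 : ℝ, 0 < v0 ∧
      ∃ v : ℕ → ℝ, v 0 = 0 ∧ v 1 = v0 ∧
        (∀ n : ℕ, v (n+1) * (v (n+2) + v n + 1) = ε * ((n : ℝ) + 1)) ∧
        (∀ n : ℕ, 0 < v (n+1)) := by
  have h' : DP1.Hyp ε := h
  set w := DP1.vlim ε with hw
  have wfix : ∀ n, w n = Tmap ε w n := DP1.vlim_fix hε h'
  have wpos : ∀ n, 0 < w n := fun n => DP1.vlim_pos hε n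
  have wnn : ∀ n, 0 ≤ w n := fun n => (wpos n).le
  have wsand : ∀ j, (∀ n, bnd ε (2*j) n ≤ w n) ∧ (∀ n, w n ≤ bnd ε (2*j+1) n) :=
    DP1.sandwich hε wnn wfix
  refine ⟨w 0, ⟨wpos 0, ?_⟩, ?_⟩
  · refine ⟨fun m => match m with | 0 => 0 | (n+1) => w n, rfl, rfl, ?_, fun n => wpos n⟩
    intro n
    have key := DP1.fix_eq hε wnn wfix n
    cases n with
    | zero =>
      show w 0 * (w 1 + 0 + 1) = ε * (((0:ℕ):ℝ) + 1)
      have e : DP1.Ssum w 0 = w 1 := rfl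
      rw [e] at key
      push_cast at key ⊢
      linear_combination key
    | succ m =>
      show w (m+1) * (w (m+2) + w m + 1) = ε * ((((m+1):ℕ):ℝ) + 1)
      have e : DP1.Ssum w (m+1) = w m + w (m+2) := rfl
      rw [e] at key
      push_cast at key ⊢
      linear_combination key
  · rintro v0' ⟨hv0', V, hV0, hV1, hrec, hpos⟩
    have hVnn : ∀ n, 0 ≤ V n := by
      intro n
      cases n with
      | zero => rw [hV0]
      | succ m => exact (hpos m).le
    set u : ℕ → ℝ := fun n => V (n+1) with hu
    have hufix : ∀ n, u n = Tmap ε u n := by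
      intro n
      have hD : (0:ℝ) < V (n+2) + V n + 1 := by
        have := hVnn n
        have := hpos (n+1)
        linarith
      have e1 : u n = ε * ((n:ℝ)+1) / (V (n+2) + V n + 1) := by
        rw [hu]
        field_simp
        linear_combination hrec n
      rw [DP1.Tmap_eq, e1]
      congr 1
      cases n with
      | zero =>
        have e : DP1.Ssum u 0 = V 2 := rfl
        rw [e, hV0]
        ring
      | succ m =>
        have e : DP1.Ssum u (m+1) = V (m+1) + V (m+3) := rfl
        rw [e]
        ring
    have usand := DP1.sandwich hε (fun n => hVnn (n+1)) hufix
    have key : ∀ n, u n = w n := by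
      intro n
      exact DP1.eq_of_squeeze hε h' n
        (fun j => ⟨(usand j).1 n, (usand j).2 n⟩)
        (fun j => ⟨(wsand j).1 n, (wsand j).2 n⟩)
    rw [← hV1]
    exact key 0
end

section
/- Let y : (0, ∞) → ℝ be differentiable with y(t) ≠ 0 and y(t) ≠ 1 for all t > 0, and suppose y satisfies the Riccati equation t·y'(t) = (1/3)·y(t)² − t·y(t) − 1/3 for all t > 0. Then y is twice differentiable on (0, ∞) and satisfies the Painlevé V equation y''(t) = (1/(2y) + 1/(y−1))·(y')² − y'/t + (y−1)²(y²−1)/(18 t² y) − y/(3t) − y(y+1)/(2(y−1)) for all t > 0 (that is, Painlevé V with parameters α = 1/18, β = −1/18, γ = −1/3, δ = −1/2). -/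
/-!
Differentiating the Riccati equation `t y' = a y² + b t y + c` gives
`y' + t y'' = 2 a y y' + b y + b t y'`, so `y''` is a rational function of `t`, `y`, `y'`.
Eliminating `y'` with the Riccati equation once more, both sides of Painlevé V become the
same rational function of `t` and `y` when `(a, b, c) = (1/3, -1, -1/3)`.
-/

open Filter Topology

theorem hasDerivAt_deriv_of_riccati {y : ℝ → ℝ} {a b c t : ℝ} (ht : t ≠ 0)
    (hy : DifferentiableAt ℝ y t)
    (hric : ∀ᶠ s in 𝓝 t, s * deriv y s = a * y s ^ 2 + b * s * y s + c) :
    HasDerivAt (deriv y) (((2 * a * y t + b * t - 1) * deriv y t + b * y t) / t) t := by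
  have hderiv_eq : deriv y =ᶠ[𝓝 t] fun s => (a * y s ^ 2 + b * s * y s + c) / s := by
    filter_upwards [hric, eventually_ne_nhds ht] with s hs hs0
    rw [← hs, mul_div_cancel_left₀ _ hs0]
  have hy' := hy.hasDerivAt
  have hquot : HasDerivAt (fun s => (a * y s ^ 2 + b * s * y s + c) / s)
      (((a * (2 * y t ^ 1 * deriv y t) + (b * 1 * y t + b * t * deriv y t)) * t
        - (a * y t ^ 2 + b * t * y t + c) * 1) / t ^ 2) t :=
    ((((hy'.pow 2).const_mul a).add
      (((hasDerivAt_id t).const_mul b).mul hy')).add_const c).div (hasDerivAt_id t) ht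
  refine (hquot.congr_of_eventuallyEq hderiv_eq).congr_deriv ?_
  rw [← hric.self_of_nhds]
  field_simp
  ring

theorem eq_painleveV_rhs_of_riccati {t y p q : ℝ} (ht : t ≠ 0) (hy0 : y ≠ 0)
    (hy1 : y ≠ 1) (hp : t * p = 1 / 3 * y ^ 2 - t * y - 1 / 3)
    (hq : q = ((2 * (1 / 3) * y + -1 * t - 1) * p + -1 * y) / t) :
    q = (1 / (2 * y) + 1 / (y - 1)) * p ^ 2 - p / t
        + (y - 1) ^ 2 * (y ^ 2 - 1) / (18 * t ^ 2 * y)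
        - y / (3 * t) - y * (y + 1) / (2 * (y - 1)) := by
  have hp' : p = (1 / 3 * y ^ 2 - t * y - 1 / 3) / t := by
    rw [← hp, mul_div_cancel_left₀ _ ht]
  have hy1' : y - 1 ≠ 0 := sub_ne_zero.mpr hy1
  subst hq hp'
  field_simp
  ring

/-- A solution of the Riccati equation `t y' = y²/3 − t y − 1/3` on `(0,∞)`
(avoiding the values 0 and 1) is twice differentiable and satisfies the Painlevé V
equation with parameters `(α, β, γ, δ) = (1/18, −1/18, −1/3, −1/2)`. -/
theorem statement13 (y : ℝ → ℝ)
    (hy : ∀ t : ℝ, 0 < t → DifferentiableAt ℝ y t)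
    (hy0 : ∀ t : ℝ, 0 < t → y t ≠ 0)
    (hy1 : ∀ t : ℝ, 0 < t → y t ≠ 1)
    (hric : ∀ t : ℝ, 0 < t →
      t * deriv y t = (1/3) * (y t)^2 - t * y t - 1/3) :
    ∀ t : ℝ, 0 < t → DifferentiableAt ℝ (deriv y) t ∧
      deriv (deriv y) t =
        (1 / (2 * y t) + 1 / (y t - 1)) * (deriv y t)^2 - deriv y t / t
          + (y t - 1)^2 * ((y t)^2 - 1) / (18 * t^2 * y t)
          - y t / (3 * t) - y t * (y t + 1) / (2 * (y t - 1)) := by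
  intro t ht
  have hric_near : ∀ᶠ s in 𝓝 t, s * deriv y s = 1 / 3 * y s ^ 2 + -1 * s * y s + -1 / 3 := by
    filter_upwards [Ioi_mem_nhds ht] with s hs
    rw [hric s hs]
    ring
  have hy'' := hasDerivAt_deriv_of_riccati ht.ne' (hy t ht) hric_near
  exact ⟨hy''.differentiableAt, eq_painleveV_rhs_of_riccati ht.ne' (hy0 t ht)
    (hy1 t ht) (hric t ht) hy''.deriv⟩
end

section
/- Suppose real sequences (aₙ)_{n≥0}, (bₙ)_{n≥0}, (cₙ)_{n≥0} satisfy, for all n ≥ 0, a_{n+1} = (aₙ + bₙ + cₙ − 1)/2, b_{n+1} = −(aₙ + bₙ − cₙ − 1)/2, and c_{n+1} = aₙ − bₙ. Then for all n ≥ 0: a_{n+3} = aₙ − 1, bₙ = a_{n+1} − a_{n+2}, and cₙ = a_{n+1} + b_{n+1}. Moreover there exist real constants μ, κ, λ such that for all n ≥ 0: aₙ = μ cos(2πn/3) + κ sin(2πn/3) + λ − n/3, bₙ = √3·κ cos(2πn/3) − √3·μ sin(2πn/3) + 1/3, and cₙ = −2μ cos(2πn/3) − 2κ sin(2πn/3)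 + λ − n/3. -/
open Real

lemma st15_cos23 : Real.cos (2 * Real.pi / 3) = -(1/2) := by
  have h : 2 * Real.pi / 3 = Real.pi - Real.pi / 3 := by ring
  rw [h, Real.cos_pi_sub, Real.cos_pi_div_three]

lemma st15_sin23 : Real.sin (2 * Real.pi / 3) = Real.sqrt 3 / 2 := by
  have h : 2 * Real.pi / 3 = Real.pi - Real.pi / 3 := by ring
  rw [h, Real.sin_pi_sub, Real.sin_pi_div_three]

lemma st15_cos_step (n : ℕ) :
    Real.cos (2 * Real.pi * ((n+1 : ℕ) : ℝ) / 3) =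
      -(1/2) * Real.cos (2 * Real.pi * n / 3)
      - Real.sqrt 3 / 2 * Real.sin (2 * Real.pi * n / 3) := by
  have h : 2 * Real.pi * ((n+1 : ℕ) : ℝ) / 3 = 2 * Real.pi * n / 3 + 2 * Real.pi / 3 := by
    push_cast; ring
  rw [h, Real.cos_add, st15_cos23, st15_sin23]; ring

lemma st15_sin_step (n : ℕ) :
    Real.sin (2 * Real.pi * ((n+1 : ℕ) : ℝ) / 3) =
      Real.sqrt 3 / 2 * Real.cos (2 * Real.pi * n / 3)
      - 1/2 * Real.sin (2 * Real.pi * n / 3) := by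
  have h : 2 * Real.pi * ((n+1 : ℕ) : ℝ) / 3 = 2 * Real.pi * n / 3 + 2 * Real.pi / 3 := by
    push_cast; ring
  rw [h, Real.sin_add, st15_cos23, st15_sin23]; ring

/-- Evolution of the Painlevé V parameters under the Bäcklund transformation
`ℛ = 𝒯₋₁,₁,₁`: the third-order relation `a_{n+3} = aₙ − 1`, the expressions for
`bₙ` and `cₙ` in terms of the `a`'s, and the explicit trigonometric solution. -/
theorem statement15 (a b c : ℕ → ℝ)
    (ha : ∀ n : ℕ, a (n+1) = (a n + b n + c n - 1) / 2)
    (hb : ∀ n : ℕ, b (n+1) = -(a n + b n - c n - 1) / 2)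
    (hc : ∀ n : ℕ, c (n+1) = a n - b n) :
    (∀ n : ℕ, a (n+3) = a n - 1) ∧
    (∀ n : ℕ, b n = a (n+1) - a (n+2)) ∧
    (∀ n : ℕ, c n = a (n+1) + b (n+1)) ∧
    ∃ μ κ lam : ℝ, ∀ n : ℕ,
      a n = μ * Real.cos (2 * Real.pi * n / 3) + κ * Real.sin (2 * Real.pi * n / 3)
              + lam - (n : ℝ) / 3 ∧
      b n = Real.sqrt 3 * κ * Real.cos (2 * Real.pi * n / 3)
              - Real.sqrt 3 * μ * Real.sin (2 * Real.pi * n / 3) + 1/3 ∧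
      c n = -2 * μ * Real.cos (2 * Real.pi * n / 3) - 2 * κ * Real.sin (2 * Real.pi * n / 3)
              + lam - (n : ℝ) / 3 := by
  have h3 : Real.sqrt 3 * Real.sqrt 3 = 3 :=
    Real.mul_self_sqrt (by norm_num)
  refine ⟨?_, ?_, ?_, ?_⟩
  · intro n
    have h0a := ha n; have h0b := hb n; have h0c := hc n
    have h1a := ha (n+1); have h1b := hb (n+1); have h1c := hc (n+1)
    have h2a := ha (n+1+1)
    show a (n+1+1+1) = a n - 1
    linarith
  · intro n
    have h0a := ha n; have h0b := hb n; have h0c := hc n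
    have h1a := ha (n+1)
    show b n = a (n+1) - a (n+1+1)
    linarith
  · intro n
    have h0a := ha n; have h0b := hb n
    linarith
  · refine ⟨(a 0 - c 0)/3, Real.sqrt 3 * (b 0 - 1/3)/3, (2 * a 0 + c 0)/3, ?_⟩
    intro n
    induction n with
    | zero =>
      norm_num
      constructor
      · ring
      constructor
      · linear_combination -(b 0 - 1/3)/3 * h3
      · ring
    | succ n ih =>
      obtain ⟨iha, ihb, ihc⟩ := ih
      refine ⟨?_, ?_, ?_⟩
      · rw [ha n, iha, ihb, ihc, st15_cos_step n, st15_sin_step n]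
        push_cast; ring
      · rw [hb n, iha, ihb, ihc, st15_cos_step n, st15_sin_step n]
        linear_combination (((a 0 - c 0)/3) * Real.cos (2 * Real.pi * n / 3)
          + (Real.sqrt 3 * (b 0 - 1/3)/3) * Real.sin (2 * Real.pi * n / 3)) / 2 * h3
      · rw [hc n, iha, ihb, st15_cos_step n, st15_sin_step n]
        push_cast; ring
end

section
/- Let ξ, ζ ∈ ℝ and set ζ⁺ = 3 − ζ and ξ⁺ = ξ + ζ⁺. Suppose η : (0, ∞) → ℝ is differentiable, η(ε) ≠ −1 for all ε > 0, and η satisfies the Riccati equation 3ε² η'(ε) + η(ε)² + (1 − ζ⁺ ε) η(ε) − ξ⁺ ε = 0 for all ε > 0. Define g(ε) = ξ ε/(1 + η(ε)). Then g is differentiable and satisfies 3ε² g'(ε) + g(ε)² + (1 − ζ ε) g(ε) − ξ ε = 0 for all ε > 0. -/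
/-!
Write `R_{ξ,ζ}(ε, y, y') = 3ε²y' + y² + (1 − ζε)y − ξε` for the Riccati residual. Differentiating
`g = ξε/(1 + η)` by the quotient rule and clearing the denominator gives the identity
`R_{ξ,ζ}(ε, g, g') = −ξε/(1 + η)² · R_{ξ⁺,ζ⁺}(ε, η, η')`, so `g` solves its equation wherever `η` does.
-/

def riccatiResidual {K : Type*} [Field K] (ξ ζ ε y y' : K) : K :=
  3 * ε ^ 2 * y' + y ^ 2 + (1 - ζ * ε) * y - ξ * ε

theorem riccatiResidual_mul_div_one_add {K : Type*} [Field K] (ξ ζ ε y y' : K) (hy : 1 + y ≠ 0) :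
    riccatiResidual ξ ζ ε (ξ * ε / (1 + y)) (ξ * (1 + y - ε * y') / (1 + y) ^ 2) =
      -(ξ * ε / (1 + y) ^ 2) * riccatiResidual (ξ + (3 - ζ)) (3 - ζ) ε y y' := by
  unfold riccatiResidual
  field_simp
  ring

theorem hasDerivAt_mul_div_one_add {𝕜 : Type*} [NontriviallyNormedField 𝕜] {η : 𝕜 → 𝕜}
    {η' x : 𝕜} (ξ : 𝕜) (hη : HasDerivAt η η' x) (hx : 1 + η x ≠ 0) :
    HasDerivAt (fun e => ξ * e / (1 + η e)) (ξ * (1 + η x - x * η') / (1 + η x) ^ 2) x := by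
  refine (((hasDerivAt_id' x).const_mul ξ).div (hη.const_add 1) hx).congr_deriv ?_
  ring

/-- Propagation of Riccati equations along the continued-fraction recursion
`ηₙ = ξₙ ε/(1 + η_{n+1})`: if `η` satisfies the Riccati equation with parameters
`(ξ⁺, ζ⁺) = (ξ + (3 − ζ), 3 − ζ)`, then `g(ε) = ξε/(1 + η(ε))` satisfies the one
with parameters `(ξ, ζ)`. -/
theorem statement16 (ξ ζ : ℝ) (η : ℝ → ℝ)
    (hdiff : ∀ ε : ℝ, 0 < ε → DifferentiableAt ℝ η ε)
    (hne : ∀ ε : ℝ, 0 < ε → η ε ≠ -1)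
    (hric : ∀ ε : ℝ, 0 < ε →
      3 * ε^2 * deriv η ε + (η ε)^2 + (1 - (3 - ζ) * ε) * η ε - (ξ + (3 - ζ)) * ε = 0) :
    ∀ ε : ℝ, 0 < ε →
      DifferentiableAt ℝ (fun e : ℝ => ξ * e / (1 + η e)) ε ∧
      3 * ε^2 * deriv (fun e : ℝ => ξ * e / (1 + η e)) ε
        + (ξ * ε / (1 + η ε))^2 + (1 - ζ * ε) * (ξ * ε / (1 + η ε)) - ξ * ε = 0 := by
  intro ε hε
  have hden : 1 + η ε ≠ 0 := fun h => hne ε hε (by linear_combination h)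
  have hg := hasDerivAt_mul_div_one_add ξ (hdiff ε hε).hasDerivAt hden
  refine ⟨hg.differentiableAt, ?_⟩
  have hres := riccatiResidual_mul_div_one_add ξ ζ ε (η ε) (deriv η ε) hden
  rw [show riccatiResidual (ξ + (3 - ζ)) (3 - ζ) ε (η ε) (deriv η ε) = 0 from hric ε hε,
    mul_zero] at hres
  rw [hg.deriv]
  exact hres
end

section
/- There exists exactly one differentiable function v : (0, ∞) → ℝ such that 3ε² v'(ε) = ε(1 + 2v(ε)) − v(ε) − v(ε)² and v(ε) > 0 hold for all ε > 0. -/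
/-!
With `t = 1 / (3 ε)`, the substitution `v = -u'(t) / u(t)` linearises the Riccati equation into
`3 t u'' - (3 t - 2) u' - u = 0`. This is solved by the Laplace transform `u` of `(s + s²)^(-2/3)`,
whose derivatives are, up to sign, its higher moments, all positive.

For uniqueness, every positive solution satisfies `w ε ≤ 2 ε` on `(0, 1/2]`; for two of them,
`(w - v)⁴ / ε³` is nonincreasing on `(0, ∞)` and `O(ε)` as `ε → 0`, hence zero.
-/

open MeasureTheory Set Real Filter Topology

namespace Riccati

noncomputable def laplaceMomentIntegrand (n : ℕ) (t s : ℝ) : ℝ :=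
  s ^ n * exp (-(t * s)) * (s + s ^ 2) ^ (-(2 / 3) : ℝ)

noncomputable def laplaceMoment (n : ℕ) (t : ℝ) : ℝ :=
  ∫ s in Ioi 0, laplaceMomentIntegrand n t s

lemma laplaceMomentIntegrand_pos (n : ℕ) (t : ℝ) {s : ℝ} (hs : 0 < s) :
    0 < laplaceMomentIntegrand n t s := by
  unfold laplaceMomentIntegrand
  positivity

lemma continuousOn_laplaceMomentIntegrand (n : ℕ) (t : ℝ) :
    ContinuousOn (laplaceMomentIntegrand n t) (Ioi 0) :=
  (continuous_pow n |>.mul (by fun_prop)).continuousOn.mul <|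
    (by fun_prop : Continuous fun s : ℝ ↦ s + s ^ 2).continuousOn.rpow_const
      fun s hs ↦ Or.inl (by have : (0 : ℝ) < s := hs; positivity)

lemma integrableOn_laplaceMomentIntegrand (n : ℕ) {t : ℝ} (ht : 0 < t) :
    IntegrableOn (laplaceMomentIntegrand n t) (Ioi 0) := by
  have hdom : IntegrableOn (fun s : ℝ ↦ s ^ ((n : ℝ) - 2 / 3) * exp (-t * s ^ (1 : ℝ))) (Ioi 0) :=
    integrableOn_rpow_mul_exp_neg_mul_rpow (by linarith [n.cast_nonneg (α := ℝ)]) one_pos ht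
  refine hdom.mono' ((continuousOn_laplaceMomentIntegrand n t).aestronglyMeasurable
    measurableSet_Ioi) ?_
  filter_upwards [self_mem_ae_restrict measurableSet_Ioi] with s (hs : 0 < s)
  have hweight : (s + s ^ 2) ^ (-(2 / 3) : ℝ) ≤ s ^ (-(2 / 3) : ℝ) :=
    rpow_le_rpow_of_nonpos hs (by nlinarith) (by norm_num)
  rw [norm_of_nonneg (laplaceMomentIntegrand_pos n t hs).le, laplaceMomentIntegrand, rpow_one,
    neg_mul, sub_eq_add_neg, rpow_add hs, rpow_natCast, mul_right_comm]
  gcongr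

lemma laplaceMoment_pos (n : ℕ) {t : ℝ} (ht : 0 < t) : 0 < laplaceMoment n t := by
  refine setIntegral_pos_iff_support_of_nonneg_ae ?_ (integrableOn_laplaceMomentIntegrand n ht)
    |>.2 ?_
  · filter_upwards [self_mem_ae_restrict measurableSet_Ioi] with s hs
    exact (laplaceMomentIntegrand_pos n t hs).le
  · rw [inter_eq_right.2 fun s (hs : s ∈ Ioi 0) ↦
      Function.mem_support.2 (laplaceMomentIntegrand_pos n t hs).ne', volume_Ioi]
    exact ENNReal.zero_lt_top

lemma hasDerivAt_laplaceMoment (n : ℕ) {t : ℝ} (ht : 0 < t) :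
    HasDerivAt (laplaceMoment n) (-laplaceMoment (n + 1) t) t := by
  have ht2 : 0 < t / 2 := half_pos ht
  have key := hasDerivAt_integral_of_dominated_loc_of_deriv_le (μ := volume.restrict (Ioi 0))
    (F := fun x ↦ laplaceMomentIntegrand n x) (F' := fun x s ↦ -laplaceMomentIntegrand (n + 1) x s)
    (Metric.ball_mem_nhds t ht2)
    (.of_forall fun x ↦ (continuousOn_laplaceMomentIntegrand n x).aestronglyMeasurable
      measurableSet_Ioi)
    (integrableOn_laplaceMomentIntegrand n ht)
    ((continuousOn_laplaceMomentIntegrand (n + 1) t).aestronglyMeasurable measurableSet_Ioi).neg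
    ?_ (integrableOn_laplaceMomentIntegrand (n + 1) ht2) ?_
  · rw [laplaceMoment, ← integral_neg]
    exact key.2
  · filter_upwards [self_mem_ae_restrict measurableSet_Ioi] with s (hs : 0 < s) x hx
    have hxt : t / 2 ≤ x := by linarith [(abs_lt.1 (mem_ball_iff_norm.1 hx)).1]
    rw [norm_neg, norm_of_nonneg (laplaceMomentIntegrand_pos _ x hs).le]
    unfold laplaceMomentIntegrand
    gcongr
  · filter_upwards with s x _
    have hexp : HasDerivAt (fun x ↦ exp (-(x * s))) (-s * exp (-(x * s))) x := by
      simpa [mul_comm] using ((hasDerivAt_mul_const s).neg).exp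
    refine ((hexp.const_mul (s ^ n)).mul_const _).congr_deriv ?_
    simp only [laplaceMomentIntegrand]
    ring

lemma hasDerivAt_exp_mul_rpow_one_third (t : ℝ) {s : ℝ} (hs : 0 < s) :
    HasDerivAt (fun s ↦ exp (-(t * s)) * (s + s ^ 2) ^ (1 / 3 : ℝ))
      (-(3 * t * laplaceMomentIntegrand 2 t s + (3 * t - 2) * laplaceMomentIntegrand 1 t s -
        laplaceMomentIntegrand 0 t s) / 3) s := by
  have hbase : 0 < s + s ^ 2 := by positivity
  have hexp : HasDerivAt (fun s ↦ exp (-(t * s))) (-t * exp (-(t * s))) s := by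
    simpa [mul_comm] using ((hasDerivAt_const_mul t).neg).exp
  have hpow := ((hasDerivAt_id' s).fun_add (hasDerivAt_pow 2 s)).rpow_const (p := 1 / 3)
    (Or.inl hbase.ne')
  refine (hexp.mul hpow).congr_deriv ?_
  rw [show (1 / 3 : ℝ) - 1 = -(2 / 3) by norm_num,
    show (1 / 3 : ℝ) = 1 + -(2 / 3) by norm_num, rpow_add hbase, rpow_one]
  simp only [laplaceMomentIntegrand]
  norm_num
  ring

lemma tendsto_exp_mul_rpow_one_third {t : ℝ} (ht : 0 < t) :
    Tendsto (fun s ↦ exp (-(t * s)) * (s + s ^ 2) ^ (1 / 3 : ℝ)) atTop (𝓝 0) := by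
  have hdom : Tendsto (fun s : ℝ ↦ 2 * (s ^ (2 : ℝ) * exp (-t * s))) atTop (𝓝 0) := by
    simpa using (tendsto_rpow_mul_exp_neg_mul_atTop_nhds_zero 2 t ht).const_mul 2
  refine squeeze_zero' ?_ ?_ hdom
  · filter_upwards [eventually_ge_atTop 0] with s hs
    positivity
  filter_upwards [eventually_ge_atTop 1] with s hs
  have hbase : 1 ≤ s + s ^ 2 := by nlinarith
  calc exp (-(t * s)) * (s + s ^ 2) ^ (1 / 3 : ℝ) ≤ exp (-(t * s)) * (s + s ^ 2) := by
        gcongr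
        exact rpow_le_self_of_one_le hbase (by norm_num)
    _ ≤ 2 * (s ^ (2 : ℝ) * exp (-t * s)) := by
        rw [rpow_two, neg_mul, mul_comm, ← mul_assoc]
        gcongr
        nlinarith

/-- Integration by parts: the primitive `exp (-t s) (s + s²)^(1/3)` vanishes at `0` and at `∞`. -/
lemma laplaceMoment_recurrence {t : ℝ} (ht : 0 < t) :
    3 * t * laplaceMoment 2 t + (3 * t - 2) * laplaceMoment 1 t = laplaceMoment 0 t := by
  have hcont : ContinuousWithinAt (fun s ↦ exp (-(t * s)) * (s + s ^ 2) ^ (1 / 3 : ℝ)) (Ici 0) 0 :=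
    ((continuous_exp.comp (continuous_const_mul t).neg).mul
      ((by fun_prop : Continuous fun s : ℝ ↦ s + s ^ 2).rpow_const
        fun _ ↦ Or.inr (by norm_num))).continuousWithinAt
  have hI := fun n ↦ integrableOn_laplaceMomentIntegrand n ht
  have hsum : IntegrableOn (fun s ↦ 3 * t * laplaceMomentIntegrand 2 t s +
      (3 * t - 2) * laplaceMomentIntegrand 1 t s) (Ioi 0) :=
    ((hI 2).const_mul (3 * t)).add ((hI 1).const_mul (3 * t - 2))
  have key := integral_Ioi_of_hasDerivAt_of_tendsto hcont
    (fun s hs ↦ hasDerivAt_exp_mul_rpow_one_third t hs) ((hsum.sub (hI 0)).neg.div_const 3)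
    (tendsto_exp_mul_rpow_one_third ht)
  rw [integral_div, integral_neg, integral_sub hsum (hI 0), integral_add ((hI 2).const_mul _)
    ((hI 1).const_mul _), integral_const_mul, integral_const_mul] at key
  norm_num at key
  simp only [laplaceMoment]
  linarith

def IsPosSolution (w : ℝ → ℝ) : Prop :=
  ∀ ε : ℝ, 0 < ε → DifferentiableAt ℝ w ε ∧
    3 * ε ^ 2 * deriv w ε = ε * (1 + 2 * w ε) - w ε - (w ε) ^ 2 ∧ 0 < w ε

lemma isPosSolution_laplaceMoment_ratio :
    IsPosSolution fun ε ↦ laplaceMoment 1 (3 * ε)⁻¹ / laplaceMoment 0 (3 * ε)⁻¹ := by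
  intro ε hε
  have ht : 0 < (3 * ε)⁻¹ := by positivity
  have hτ : HasDerivAt (fun ε ↦ (3 * ε)⁻¹) (-3 / (3 * ε) ^ 2) ε :=
    ((hasDerivAt_id' ε).const_mul 3 |>.congr_deriv (mul_one 3)).fun_inv (by positivity)
  have hnum := (hasDerivAt_laplaceMoment 1 ht).comp ε hτ
  have hden := (hasDerivAt_laplaceMoment 0 ht).comp ε hτ
  have hv : HasDerivAt (fun ε ↦ laplaceMoment 1 (3 * ε)⁻¹ / laplaceMoment 0 (3 * ε)⁻¹) _ ε :=
    hnum.fun_div hden (laplaceMoment_pos 0 ht).ne'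
  refine ⟨hv.differentiableAt, ?_, div_pos (laplaceMoment_pos 1 ht) (laplaceMoment_pos 0 ht)⟩
  have h3t : 3 * (3 * ε)⁻¹ * ε = 1 := by field_simp
  have hK2 : laplaceMoment 2 (3 * ε)⁻¹ =
      ε * laplaceMoment 0 (3 * ε)⁻¹ + (2 * ε - 1) * laplaceMoment 1 (3 * ε)⁻¹ := by
    linear_combination ε * laplaceMoment_recurrence ht -
      (laplaceMoment 2 (3 * ε)⁻¹ + laplaceMoment 1 (3 * ε)⁻¹) * h3t
  have hK0 := (laplaceMoment_pos 0 ht).ne'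
  rw [hv.deriv]
  simp only [Function.comp_apply, Nat.reduceAdd, hK2]
  generalize laplaceMoment 0 (3 * ε)⁻¹ = K₀ at hK0 ⊢
  field_simp
  ring

namespace IsPosSolution

variable {v w : ℝ → ℝ} {x : ℝ}

lemma pos (hw : IsPosSolution w) (hx : 0 < x) : 0 < w x := (hw x hx).2.2

lemma hasDerivAt (hw : IsPosSolution w) (hx : 0 < x) :
    HasDerivAt w ((x * (1 + 2 * w x) - w x - w x ^ 2) / (3 * x ^ 2)) x := by
  obtain ⟨hdiff, hode, -⟩ := hw x hx
  rw [← hode, mul_div_cancel_left₀ _ (by positivity)]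
  exact hdiff.hasDerivAt

lemma continuousOn (hw : IsPosSolution w) : ContinuousOn w (Ioi 0) :=
  fun _ hx ↦ (hw.hasDerivAt hx).continuousAt.continuousWithinAt

/-- Solutions cross the line `w = 2 x` only downwards, since there `w' = -1 / (3 x) < 2`. -/
lemma le_two_mul_of_le_two_mul (hw : IsPosSolution w) {a : ℝ} (ha : 0 < a) (hax : a ≤ x)
    (h : w a ≤ 2 * a) : w x ≤ 2 * x := by
  have hpos : ∀ t ∈ Icc a x, 0 < t := fun t ht ↦ ha.trans_le ht.1
  refine image_le_of_deriv_right_lt_deriv_boundary' (hw.continuousOn.mono hpos)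
    (fun t ht ↦ (hw.hasDerivAt (hpos t (Ico_subset_Icc_self ht))).hasDerivWithinAt) h
    (continuous_const.mul continuous_id).continuousOn
    (fun t _ ↦ ((hasDerivAt_id t).const_mul 2).hasDerivWithinAt) ?_ ⟨hax, le_rfl⟩
  intro t ht hwt
  have ht0 := hpos t (Ico_subset_Icc_self ht)
  rw [hwt, show t * (1 + 2 * (2 * t)) - 2 * t - (2 * t) ^ 2 = -t by ring, mul_one]
  have : -t / (3 * t ^ 2) < 0 := div_neg_of_neg_of_pos (by linarith) (by positivity)
  linarith

/-- Above the line `w = 2 x`, `1 / w + 1 / (6 x)` increases with `x`, which is incompatible with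
its exceeding `1 / (6 x) → ∞` as `x → 0`. -/
lemma le_two_mul (hw : IsPosSolution w) (hx : 0 < x) (hx2 : x ≤ 1 / 2) : w x ≤ 2 * x := by
  by_contra! hgt
  have habove : ∀ y ∈ Ioc 0 x, 2 * y < w y := fun y hy ↦ by
    by_contra! hle
    exact hgt.not_ge (hw.le_two_mul_of_le_two_mul hy.1 hy.2 hle)
  set G : ℝ → ℝ := fun y ↦ (w y)⁻¹ + 6⁻¹ * y⁻¹
  have hG : MonotoneOn G (Ioc 0 x) := by
    have hderiv : ∀ y, 0 < y → HasDerivAt G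
        (-((y * (1 + 2 * w y) - w y - w y ^ 2) / (3 * y ^ 2)) / w y ^ 2 + 6⁻¹ * -(y ^ 2)⁻¹) y :=
      fun y hy ↦ ((hw.hasDerivAt hy).inv (hw.pos hy).ne').add
        ((hasDerivAt_inv hy.ne').const_mul 6⁻¹)
    refine monotoneOn_of_hasDerivWithinAt_nonneg (convex_Ioc 0 x)
      (fun y hy ↦ (hderiv y hy.1).continuousAt.continuousWithinAt)
      (fun y hy ↦ (hderiv y (interior_subset hy).1).hasDerivWithinAt) fun y hy ↦ ?_
    rw [interior_Ioc] at hy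
    have hy0 := hy.1
    have hwy := hw.pos hy0
    have hgap := habove y (Ioo_subset_Ioc_self hy)
    rw [show -((y * (1 + 2 * w y) - w y - w y ^ 2) / (3 * y ^ 2)) / w y ^ 2 + 6⁻¹ * -(y ^ 2)⁻¹
        = ((w y - 2 * y) ^ 2 + 2 * (w y - 2 * y) + 2 * y * (1 - 2 * y)) / (6 * y ^ 2 * w y ^ 2) by
      field_simp; ring]
    have : 0 ≤ 2 * y * (1 - 2 * y) := mul_nonneg (by positivity) (by linarith [hy.2])
    positivity
  obtain ⟨y, hGy, hy⟩ := ((tendsto_inv_nhdsGT_zero.const_mul_atTop (by norm_num : (0:ℝ) < 6⁻¹)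
    |>.eventually_gt_atTop (G x)).and (Ioc_mem_nhdsGT hx)).exists
  have : 6⁻¹ * y⁻¹ < G y := lt_add_of_pos_left _ (inv_pos.2 (hw.pos hy.1))
  exact (hGy.trans this).not_ge (hG hy ⟨hx, le_rfl⟩ hy.2)

/-- `d = w - v` satisfies `d' = c d` with `c = (2 x - 1 - v - w) / (3 x²) < 3 / (4 x)`, so the
weight `x⁻³` makes `d⁴ / x³` decrease. -/
lemma antitoneOn_sub_pow_four_div (hv : IsPosSolution v) (hw : IsPosSolution w) :
    AntitoneOn (fun x ↦ (w x - v x) ^ 4 / x ^ 3) (Ioi 0) := by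
  have hderiv : ∀ x, 0 < x → HasDerivAt (fun x ↦ (w x - v x) ^ 4 / x ^ 3)
      (-((w x - v x) ^ 4 * (x + 4 + 4 * v x + 4 * w x)) / (3 * x ^ 5)) x := by
    intro x hx
    refine ((((hw.hasDerivAt hx).fun_sub (hv.hasDerivAt hx)).fun_pow 4).div (hasDerivAt_pow 3 x)
      (by positivity)).congr_deriv ?_
    field_simp
    ring
  refine antitoneOn_of_hasDerivWithinAt_nonpos (convex_Ioi 0)
    (fun x hx ↦ (hderiv x hx).continuousAt.continuousWithinAt)
    (fun x hx ↦ (hderiv x (interior_subset hx)).hasDerivWithinAt) fun x hx ↦ ?_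
  rw [interior_Ioi] at hx
  have := hv.pos hx
  have := hw.pos hx
  have : 0 < x := hx
  exact div_nonpos_of_nonpos_of_nonneg (neg_nonpos.2 (by positivity)) (by positivity)

lemma eq (hv : IsPosSolution v) (hw : IsPosSolution w) (hx : 0 < x) : w x = v x := by
  have hsmall : ∀ᶠ y in 𝓝[>] 0, (w x - v x) ^ 4 / x ^ 3 ≤ 16 * y := by
    filter_upwards [Ioc_mem_nhdsGT (lt_min hx (by norm_num : (0:ℝ) < 1 / 2))] with y hy
    have hy0 := hy.1
    have hyx := hy.2.trans (min_le_left _ _)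
    have hy2 := hy.2.trans (min_le_right _ _)
    have habs : |w y - v y| ≤ 2 * y := by
      have := hv.le_two_mul hy0 hy2
      have := hw.le_two_mul hy0 hy2
      have := hv.pos hy0
      have := hw.pos hy0
      exact abs_le.2 ⟨by linarith, by linarith⟩
    calc (w x - v x) ^ 4 / x ^ 3 ≤ (w y - v y) ^ 4 / y ^ 3 :=
          antitoneOn_sub_pow_four_div hv hw hy0 hx hyx
      _ ≤ (2 * y) ^ 4 / y ^ 3 := by
          rw [← (show Even 4 by decide).pow_abs]
          gcongr
      _ = 16 * y := by field_simp; ring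
  have hlim : Tendsto (fun y : ℝ ↦ 16 * y) (𝓝[>] 0) (𝓝 0) := by
    simpa using ((continuous_const_mul (16 : ℝ)).tendsto 0).mono_left nhdsWithin_le_nhds
  have hle : (w x - v x) ^ 4 ≤ 0 := by
    simpa using (div_le_iff₀ (by positivity)).1 (ge_of_tendsto hlim hsmall)
  have := pow_eq_zero_iff (n := 4) (by norm_num) |>.1 (hle.antisymm (by positivity))
  linarith

end IsPosSolution

end Riccati

/-- There is exactly one differentiable function `v` on `(0,∞)` satisfying the
Riccati equation `3ε² v' = ε(1 + 2v) − v − v²` with `v(ε) > 0` for all `ε > 0`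
(uniqueness meaning any two such functions agree on `(0,∞)`). -/
theorem statement17 :
    ∃ v : ℝ → ℝ,
      (∀ ε : ℝ, 0 < ε → DifferentiableAt ℝ v ε ∧
        3 * ε^2 * deriv v ε = ε * (1 + 2 * v ε) - v ε - (v ε)^2 ∧ 0 < v ε) ∧
      ∀ w : ℝ → ℝ,
        (∀ ε : ℝ, 0 < ε → DifferentiableAt ℝ w ε ∧
          3 * ε^2 * deriv w ε = ε * (1 + 2 * w ε) - w ε - (w ε)^2 ∧ 0 < w ε) →
        ∀ ε : ℝ, 0 < ε → w ε = v ε := by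
  have hsol := Riccati.isPosSolution_laplaceMoment_ratio
  exact ⟨_, hsol, fun _ hw _ ↦ Riccati.IsPosSolution.eq hsol hw⟩
end

section
/- For every ε > 0 and every n ≥ 0, the increasing sequence (b_n^{(2j-1)}(ε))_{j ≥ 0} and the decreasing sequence (b_n^{(2j)}(ε))_{j ≥ 0} converge to a common limit; equivalently, Δ_n^{(k)}(ε) → 0 as k → ∞ for every n ≥ 0. -/
open Filter

namespace S19

lemma Tmap_nonneg {ε : ℝ} (hε : 0 < ε) {u : ℕ → ℝ} (hu : ∀ n, 0 ≤ u n) (n : ℕ) :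
    0 ≤ Tmap ε u n := by
  cases n with
  | zero => exact div_nonneg hε.le (by linarith [hu 1])
  | succ n =>
    exact div_nonneg (by positivity) (by linarith [hu n, hu (n+2)])

lemma bnd_nonneg {ε : ℝ} (hε : 0 < ε) (k n : ℕ) : 0 ≤ bnd ε k n := by
  induction k generalizing n with
  | zero => simp [bnd]
  | succ k ih => exact Tmap_nonneg hε (fun m => ih m) n

lemma Tmap_le {ε : ℝ} (hε : 0 < ε) {u v : ℕ → ℝ} (hu : ∀ n, 0 ≤ u n)
    (huv : ∀ n, u n ≤ v n) (n : ℕ) : Tmap ε v n ≤ Tmap ε u n := by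
  cases n with
  | zero =>
    exact div_le_div_of_nonneg_left hε.le (by linarith [hu 1]) (by linarith [huv 1])
  | succ n =>
    exact div_le_div_of_nonneg_left (by positivity) (by linarith [hu n, hu (n+2)])
      (by linarith [huv n, huv (n+2)])

lemma bnd_le_one' {ε : ℝ} (hε : 0 < ε) (k n : ℕ) : bnd ε (k+1) n ≤ bnd ε 1 n := by
  show Tmap ε (bnd ε k) n ≤ Tmap ε (bnd ε 0) n
  exact Tmap_le hε (fun m => by simp [bnd]) (fun m => by simpa [bnd] using bnd_nonneg hε k m) n

/-- interleaving: bnd (2j) ≤ bnd (2j+1) and bnd (2j+2) ≤ bnd (2j+1) -/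
lemma sandwich {ε : ℝ} (hε : 0 < ε) (j : ℕ) :
    (∀ n, bnd ε (2*j) n ≤ bnd ε (2*j+1) n) ∧ (∀ n, bnd ε (2*j+2) n ≤ bnd ε (2*j+1) n) := by
  induction j with
  | zero =>
    constructor
    · intro n; simpa [bnd] using bnd_nonneg hε 1 n
    · intro n; exact bnd_le_one' hε 1 n
  | succ j ih =>
    have h1 : ∀ n, bnd ε (2*(j+1)) n ≤ bnd ε (2*(j+1)+1) n := by
      intro n
      have : ∀ m, bnd ε (2*j+3) m = Tmap ε (bnd ε (2*j+2)) m := fun m => rfl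
      have h := Tmap_le hε (fun m => bnd_nonneg hε (2*j+2) m) ih.2 n
      -- Tmap (bnd (2j+1)) ≤ Tmap (bnd (2j+2)) : bnd(2j+2) ≤ bnd(2j+3)
      show bnd ε (2*j+2) n ≤ bnd ε (2*j+3) n
      simpa [bnd, show 2*j+1+1 = 2*j+2 from rfl] using h
    refine ⟨h1, fun n => ?_⟩
    -- bnd (2j+4) = Tmap (bnd (2j+3)) ≤ Tmap (bnd (2j+2)) = bnd (2j+3)
    have h := Tmap_le hε (fun m => bnd_nonneg hε (2*j+2) m) (fun m => h1 m) n
    show bnd ε (2*j+4) n ≤ bnd ε (2*j+3) n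
    simpa [bnd, show 2*(j+1) = 2*j+2 from rfl, show 2*(j+1)+1 = 2*j+3 from rfl] using h

lemma even_mono {ε : ℝ} (hε : 0 < ε) (j : ℕ) (n : ℕ) :
    bnd ε (2*j) n ≤ bnd ε (2*j+2) n := by
  induction j generalizing n with
  | zero => simpa [bnd] using bnd_nonneg hε 2 n
  | succ j ih =>
    -- apply Tmap twice to ih
    have h1 : ∀ m, bnd ε (2*j+3) m ≤ bnd ε (2*j+1) m := fun m =>
      Tmap_le hε (fun l => bnd_nonneg hε (2*j) l) (fun l => ih l) m
    have h2 : ∀ m, bnd ε (2*j+2) m ≤ bnd ε (2*j+4) m := fun m =>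
      Tmap_le hε (fun l => bnd_nonneg hε (2*j+3) l) (fun l => h1 l) m
    simp only [show 2*(j+1) = 2*j+2 by ring, show 2*(j+1)+2 = 2*j+4 by ring]
    exact h2 n

lemma odd_anti {ε : ℝ} (hε : 0 < ε) (j : ℕ) (n : ℕ) :
    bnd ε (2*j+3) n ≤ bnd ε (2*j+1) n := by
  exact Tmap_le hε (fun l => bnd_nonneg hε (2*j) l) (fun l => even_mono hε j l) n

end S19

namespace S19

lemma bnd_one {ε : ℝ} (n : ℕ) : bnd ε 1 n = ε * ((n:ℝ)+1) := by
  cases n with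
  | zero => show ε / (1 + 0) = _ ; norm_num
  | succ n => show ε * ((n:ℝ)+2) / (1 + 0 + 0) = _ ; push_cast; ring_nf

lemma bnd_two {ε : ℝ} (n : ℕ) : bnd ε 2 n = ε * ((n:ℝ)+1) / (1 + 2*ε*((n:ℝ)+1)) := by
  cases n with
  | zero =>
    show ε / (1 + bnd ε 1 1) = _
    rw [bnd_one]; norm_num [mul_comm]
  | succ n =>
    show ε * ((n:ℝ)+2) / (1 + bnd ε 1 n + bnd ε 1 (n+2)) = _
    rw [bnd_one, bnd_one]; push_cast; ring_nf

lemma bnd_two_pos {ε : ℝ} (hε : 0 < ε) (n : ℕ) : 0 < bnd ε 2 n := by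
  rw [bnd_two]; positivity

lemma odd_anti' {ε : ℝ} (hε : 0 < ε) {i j : ℕ} (h : i ≤ j) (n : ℕ) :
    bnd ε (2*j+1) n ≤ bnd ε (2*i+1) n := by
  induction j with
  | zero => simp_all
  | succ j ih =>
    rcases Nat.lt_or_ge i (j+1) with h'|h'
    · have := odd_anti hε j n
      have h2 := ih (by omega)
      calc bnd ε (2*(j+1)+1) n = bnd ε (2*j+3) n := by ring_nf
        _ ≤ bnd ε (2*j+1) n := odd_anti hε j n
        _ ≤ bnd ε (2*i+1) n := h2
    · have : i = j+1 := by omega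
      simp [this]

lemma even_mono' {ε : ℝ} (hε : 0 < ε) {i j : ℕ} (h : i ≤ j) (n : ℕ) :
    bnd ε (2*i) n ≤ bnd ε (2*j) n := by
  induction j with
  | zero => simp_all
  | succ j ih =>
    rcases Nat.lt_or_ge i (j+1) with h'|h'
    · calc bnd ε (2*i) n ≤ bnd ε (2*j) n := ih (by omega)
        _ ≤ bnd ε (2*j+2) n := even_mono hε j n
        _ = bnd ε (2*(j+1)) n := by ring_nf
    · have : i = j+1 := by omega
      simp [this]

lemma even_le_odd {ε : ℝ} (hε : 0 < ε) (i j n : ℕ) :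
    bnd ε (2*j) n ≤ bnd ε (2*i+1) n := by
  calc bnd ε (2*j) n ≤ bnd ε (2*(max i j)) n := even_mono' hε (le_max_right i j) n
    _ ≤ bnd ε (2*(max i j)+1) n := (sandwich hε (max i j)).1 n
    _ ≤ bnd ε (2*i+1) n := odd_anti' hε (le_max_left i j) n

noncomputable def EE (ε : ℝ) (n : ℕ) : ℝ := ⨆ j, bnd ε (2*j) n
noncomputable def OO (ε : ℝ) (n : ℕ) : ℝ := ⨅ j, bnd ε (2*j+1) n

lemma tendsto_even {ε : ℝ} (hε : 0 < ε) (n : ℕ) :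
    Tendsto (fun j => bnd ε (2*j) n) atTop (nhds (EE ε n)) :=
  tendsto_atTop_ciSup (fun i j h => even_mono' hε h n)
    ⟨bnd ε 1 n, by rintro x ⟨j, rfl⟩; exact even_le_odd hε 0 j n⟩

lemma tendsto_odd {ε : ℝ} (hε : 0 < ε) (n : ℕ) :
    Tendsto (fun j => bnd ε (2*j+1) n) atTop (nhds (OO ε n)) :=
  tendsto_atTop_ciInf (fun i j h => odd_anti' hε h n)
    ⟨0, by rintro x ⟨j, rfl⟩; exact bnd_nonneg hε _ n⟩

lemma le_EE {ε : ℝ} (hε : 0 < ε) (j n : ℕ) : bnd ε (2*j) n ≤ EE ε n :=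
  le_ciSup ⟨bnd ε 1 n, by rintro x ⟨i, rfl⟩; exact even_le_odd hε 0 i n⟩ j

lemma OO_le {ε : ℝ} (hε : 0 < ε) (j n : ℕ) : OO ε n ≤ bnd ε (2*j+1) n :=
  ciInf_le ⟨0, by rintro x ⟨i, rfl⟩; exact bnd_nonneg hε _ n⟩ j

lemma EE_le_OO {ε : ℝ} (hε : 0 < ε) (n : ℕ) : EE ε n ≤ OO ε n := by
  apply ciSup_le; intro j
  apply le_ciInf; intro i
  exact even_le_odd hε i j n

lemma EE_pos {ε : ℝ} (hε : 0 < ε) (n : ℕ) : 0 < EE ε n :=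
  lt_of_lt_of_le (bnd_two_pos hε n) (le_EE hε 1 n)

lemma OO_pos {ε : ℝ} (hε : 0 < ε) (n : ℕ) : 0 < OO ε n :=
  lt_of_lt_of_le (EE_pos hε n) (EE_le_OO hε n)

lemma OO_le_lin {ε : ℝ} (hε : 0 < ε) (n : ℕ) : OO ε n ≤ ε * ((n:ℝ)+1) := by
  have := OO_le hε 0 n
  rwa [show 2*0+1 = 1 from rfl, bnd_one] at this

lemma EE_ge {ε : ℝ} (hε : 0 < ε) (n : ℕ) :
    ε * ((n:ℝ)+1) / (1 + 2*ε*((n:ℝ)+1)) ≤ EE ε n := by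
  have := le_EE hε 1 n
  rwa [show 2*1 = 2 from rfl, bnd_two] at this

end S19

namespace S19

lemma denomO_pos {ε : ℝ} (hε : 0 < ε) (n m : ℕ) : (0:ℝ) < 1 + OO ε n + OO ε m := by
  have := OO_pos hε n; have := OO_pos hε m; linarith

lemma denomE_pos {ε : ℝ} (hε : 0 < ε) (n m : ℕ) : (0:ℝ) < 1 + EE ε n + EE ε m := by
  have := EE_pos hε n; have := EE_pos hε m; linarith

lemma eqE0 {ε : ℝ} (hε : 0 < ε) : EE ε 0 * (1 + OO ε 1) = ε := by
  have h1 : Tendsto (fun j => bnd ε (2*(j+1)) 0) atTop (nhds (EE ε 0)) :=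
    (tendsto_even hε 0).comp (tendsto_add_atTop_nat 1)
  have hd : (0:ℝ) < 1 + OO ε 1 := by have := OO_pos hε 1; linarith
  have h2 : Tendsto (fun j => ε / (1 + bnd ε (2*j+1) 1)) atTop (nhds (ε / (1 + OO ε 1))) :=
    tendsto_const_nhds.div (tendsto_const_nhds.add (tendsto_odd hε 1)) (ne_of_gt hd)
  have he : (fun j => bnd ε (2*(j+1)) 0) = (fun j => ε / (1 + bnd ε (2*j+1) 1)) := rfl
  rw [he] at h1
  have := tendsto_nhds_unique h1 h2
  rw [this]; field_simp

lemma eqO0 {ε : ℝ} (hε : 0 < ε) : OO ε 0 * (1 + EE ε 1) = ε := by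
  have h1 : Tendsto (fun j => bnd ε (2*j+1) 0) atTop (nhds (OO ε 0)) := tendsto_odd hε 0
  have hd : (0:ℝ) < 1 + EE ε 1 := by have := EE_pos hε 1; linarith
  have h2 : Tendsto (fun j => ε / (1 + bnd ε (2*j) 1)) atTop (nhds (ε / (1 + EE ε 1))) :=
    tendsto_const_nhds.div (tendsto_const_nhds.add (tendsto_even hε 1)) (ne_of_gt hd)
  have he : (fun j => bnd ε (2*j+1) 0) = (fun j => ε / (1 + bnd ε (2*j) 1)) := rfl
  rw [he] at h1
  have := tendsto_nhds_unique h1 h2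
  rw [this]; field_simp

lemma eqE {ε : ℝ} (hε : 0 < ε) (n : ℕ) :
    EE ε (n+1) * (1 + OO ε n + OO ε (n+2)) = ε * ((n:ℝ)+2) := by
  have h1 : Tendsto (fun j => bnd ε (2*(j+1)) (n+1)) atTop (nhds (EE ε (n+1))) :=
    (tendsto_even hε (n+1)).comp (tendsto_add_atTop_nat 1)
  have hd := denomO_pos hε n (n+2)
  have h2 : Tendsto (fun j => ε * ((n:ℝ)+2) / (1 + bnd ε (2*j+1) n + bnd ε (2*j+1) (n+2)))
      atTop (nhds (ε * ((n:ℝ)+2) / (1 + OO ε n + OO ε (n+2)))) :=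
    tendsto_const_nhds.div
      ((tendsto_const_nhds.add (tendsto_odd hε n)).add (tendsto_odd hε (n+2))) (ne_of_gt hd)
  have he : (fun j => bnd ε (2*(j+1)) (n+1)) =
      (fun j => ε * ((n:ℝ)+2) / (1 + bnd ε (2*j+1) n + bnd ε (2*j+1) (n+2))) := rfl
  rw [he] at h1
  have := tendsto_nhds_unique h1 h2
  rw [this]; field_simp

lemma eqO {ε : ℝ} (hε : 0 < ε) (n : ℕ) :
    OO ε (n+1) * (1 + EE ε n + EE ε (n+2)) = ε * ((n:ℝ)+2) := by
  have h1 : Tendsto (fun j => bnd ε (2*j+1) (n+1)) atTop (nhds (OO ε (n+1))) := tendsto_odd hε (n+1)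
  have hd := denomE_pos hε n (n+2)
  have h2 : Tendsto (fun j => ε * ((n:ℝ)+2) / (1 + bnd ε (2*j) n + bnd ε (2*j) (n+2)))
      atTop (nhds (ε * ((n:ℝ)+2) / (1 + EE ε n + EE ε (n+2)))) :=
    tendsto_const_nhds.div
      ((tendsto_const_nhds.add (tendsto_even hε n)).add (tendsto_even hε (n+2))) (ne_of_gt hd)
  have he : (fun j => bnd ε (2*j+1) (n+1)) =
      (fun j => ε * ((n:ℝ)+2) / (1 + bnd ε (2*j) n + bnd ε (2*j) (n+2))) := rfl
  rw [he] at h1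
  have := tendsto_nhds_unique h1 h2
  rw [this]; field_simp

end S19

namespace S19

lemma id0 {ε : ℝ} (hε : 0 < ε) :
    (1 + EE ε 1) * (OO ε 0 - EE ε 0) = EE ε 0 * (OO ε 1 - EE ε 1) := by
  linear_combination eqO0 hε - eqE0 hε

lemma idn {ε : ℝ} (hε : 0 < ε) (n : ℕ) :
    (1 + EE ε n + EE ε (n+2)) * (OO ε (n+1) - EE ε (n+1)) =
      EE ε (n+1) * ((OO ε n - EE ε n) + (OO ε (n+2) - EE ε (n+2))) := by
  linear_combination eqO hε n - eqE hε n

lemma all_eq_of_eq0 {ε : ℝ} (hε : 0 < ε) (h0 : OO ε 0 = EE ε 0) : ∀ n, OO ε n = EE ε n := by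
  have h1 : OO ε 1 = EE ε 1 := by
    have := id0 hε
    rw [h0] at this
    have hE0 := EE_pos hε 0
    have := EE_le_OO hε 1
    nlinarith [this]
  have key : ∀ n, OO ε n = EE ε n ∧ OO ε (n+1) = EE ε (n+1) := by
    intro n
    induction n with
    | zero => exact ⟨h0, h1⟩
    | succ n ih =>
      refine ⟨ih.2, ?_⟩
      have hid := idn hε n
      rw [ih.1, ih.2] at hid
      have hE := EE_pos hε (n+1)
      have hle := EE_le_OO hε (n+2)
      nlinarith [hid]
  exact fun n => (key n).1

lemma Eprod_le {ε : ℝ} (hε : 0 < ε) (n : ℕ) :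
    EE ε n * EE ε (n+1) ≤ ε * ((n:ℝ)+1) := by
  cases n with
  | zero =>
    have h := eqE0 hε
    have h1 := EE_le_OO hε 1
    have hE0 := EE_pos hε 0
    have hE1 := EE_pos hε 1
    -- EE0*(1+OO1) = ε, so EE0*OO1 ≤ ε - EE0 ≤ ε
    norm_num
    nlinarith
  | succ n =>
    have h := eqE hε n
    have h1 := EE_le_OO hε (n+2)
    have hE := EE_pos hε (n+1)
    have hE2 := EE_pos hε (n+2)
    have hO := OO_pos hε n
    push_cast
    nlinarith

section Contradiction

variable {ε : ℝ}

/-- one-step inequality `A (n+1) * E n ≥ A n * (1 + E (n+1))` -/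
lemma stepC (hε : 0 < ε) : ∀ n : ℕ,
    (OO ε n - EE ε n) * (1 + EE ε (n+1)) ≤ (OO ε (n+1) - EE ε (n+1)) * EE ε n := by
  intro n
  induction n with
  | zero => have := id0 hε; linarith [this]
  | succ n ih =>
    have hid := idn hε n
    have hAn : 0 ≤ OO ε n - EE ε n := by linarith [EE_le_OO hε n]
    have hE1 : 0 < EE ε (n+1) := EE_pos hε (n+1)
    have h1 : (OO ε n - EE ε n) * EE ε (n+1) ≤ (OO ε n - EE ε n) * (1 + EE ε (n+1)) := by
      nlinarith
    have h2 : (OO ε n - EE ε n) * EE ε (n+1) ≤ (OO ε (n+1) - EE ε (n+1)) * EE ε n := by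
      linarith
    nlinarith [hid, h2]

lemma A_pos (hε : 0 < ε) (h0 : EE ε 0 < OO ε 0) : ∀ n, 0 < OO ε n - EE ε n := by
  intro n
  induction n with
  | zero => linarith
  | succ n ih =>
    have h := stepC hε n
    have hE := EE_pos hε n
    have hE1 := EE_pos hε (n+1)
    nlinarith

/-- two-step multiplicative growth:
`A (n+2) * E n ≥ A n * E (n+2) * (1 + 2/√(ε(n+2)))`. -/
lemma pair_growth (hε : 0 < ε) (h0 : EE ε 0 < OO ε 0) (n : ℕ) :
    (OO ε n - EE ε n) * (1 + 2 / Real.sqrt (ε * ((n:ℝ)+2))) * EE ε (n+2)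
      ≤ (OO ε (n+2) - EE ε (n+2)) * EE ε n := by
  have hE0 := EE_pos hε n
  have hE1 := EE_pos hε (n+1)
  have hE2 := EE_pos hε (n+2)
  have hA0 := A_pos hε h0 n
  have hA1 := A_pos hε h0 (n+1)
  have hA2 := A_pos hε h0 (n+2)
  have c1 := stepC hε n
  have c2 := stepC hε (n+1)
  set P := EE ε (n+1) * EE ε (n+2) with hPdef
  have hPpos : 0 < P := mul_pos hE1 hE2
  have hP : P ≤ ε * ((n:ℝ)+2) := by
    have := Eprod_le hε (n+1)
    push_cast at this ⊢
    linarith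
  set s := Real.sqrt (ε * ((n:ℝ)+2)) with hsdef
  have hεn2 : (0:ℝ) < ε * ((n:ℝ)+2) := by positivity
  have hs_pos : 0 < s := Real.sqrt_pos.mpr hεn2
  have hs_sq : s^2 = ε * ((n:ℝ)+2) := Real.sq_sqrt hεn2.le
  -- AM-GM : 2√P ≤ E(n+1) + E(n+2)
  have key1 : 2 * Real.sqrt P ≤ EE ε (n+1) + EE ε (n+2) := by
    have h := Real.sqrt_mul_self hE1.le
    nlinarith [Real.sq_sqrt hE1.le, Real.sq_sqrt hE2.le, Real.sqrt_nonneg (EE ε (n+1)),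
      Real.sqrt_nonneg (EE ε (n+2)), sq_nonneg (Real.sqrt (EE ε (n+1)) - Real.sqrt (EE ε (n+2))),
      Real.sqrt_mul hE1.le (EE ε (n+2)), hPdef]
  -- P ≤ √P * s
  have key2 : P ≤ Real.sqrt P * s := by
    have h1 : Real.sqrt P * s = Real.sqrt (P * (ε * ((n:ℝ)+2))) := (Real.sqrt_mul hPpos.le _).symm
    have h2 : Real.sqrt (P * P) = P := Real.sqrt_mul_self hPpos.le
    rw [h1, ← h2]
    apply Real.sqrt_le_sqrt
    nlinarith
  -- 2*P ≤ (E(n+1)+E(n+2)) * s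
  have key3 : 2 * P ≤ (EE ε (n+1) + EE ε (n+2)) * s := by
    have := mul_le_mul_of_nonneg_right key1 hs_pos.le
    nlinarith [Real.sqrt_nonneg P]
  -- growth of product of (1+E)'s : (1+E(n+1))*(1+E(n+2)) ≥ P * (1 + 2/s)
  have key4 : P * (1 + 2 / s) ≤ (1 + EE ε (n+1)) * (1 + EE ε (n+2)) := by
    have h2s : P * (2 / s) ≤ EE ε (n+1) + EE ε (n+2) := by
      rw [mul_div_assoc']
      rw [div_le_iff₀ hs_pos]
      linarith
    nlinarith
  -- combine the two step inequalities
  have comb : (OO ε n - EE ε n) * ((1 + EE ε (n+1)) * (1 + EE ε (n+2)))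
      ≤ (OO ε (n+2) - EE ε (n+2)) * EE ε n * EE ε (n+1) := by
    have m1 := mul_le_mul_of_nonneg_right c1 (by positivity : (0:ℝ) ≤ 1 + EE ε (n+2))
    have m2 := mul_le_mul_of_nonneg_right c2 hE0.le
    nlinarith
  have final : (OO ε n - EE ε n) * (P * (1 + 2 / s))
      ≤ (OO ε (n+2) - EE ε (n+2)) * EE ε n * EE ε (n+1) := by
    have := mul_le_mul_of_nonneg_left key4 hA0.le
    linarith
  -- cancel E(n+1)
  have hgoal : ((OO ε n - EE ε n) * (1 + 2 / s) * EE ε (n+2)) * EE ε (n+1)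
      ≤ ((OO ε (n+2) - EE ε (n+2)) * EE ε n) * EE ε (n+1) := by
    have e1 : ((OO ε n - EE ε n) * (1 + 2 / s) * EE ε (n+2)) * EE ε (n+1)
        = (OO ε n - EE ε n) * (P * (1 + 2 / s)) := by rw [hPdef]; ring
    have e2 : ((OO ε (n+2) - EE ε (n+2)) * EE ε n) * EE ε (n+1)
        = (OO ε (n+2) - EE ε (n+2)) * EE ε n * EE ε (n+1) := by ring
    rw [e1, e2]; exact final
  exact le_of_mul_le_mul_right hgoal hE1

end Contradiction

end S19

namespace S19

noncomputable def tq (ε : ℝ) (n : ℕ) : ℝ := (OO ε n - EE ε n) / EE ε n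

lemma tq_pos {ε : ℝ} (hε : 0 < ε) (h0 : EE ε 0 < OO ε 0) (n : ℕ) : 0 < tq ε n :=
  div_pos (A_pos hε h0 n) (EE_pos hε n)

lemma t_pair {ε : ℝ} (hε : 0 < ε) (h0 : EE ε 0 < OO ε 0) (n : ℕ) :
    tq ε n * (1 + 2 / Real.sqrt (ε * ((n:ℝ)+2))) ≤ tq ε (n+2) := by
  have hE0 := EE_pos hε n
  have hE2 := EE_pos hε (n+2)
  unfold tq
  rw [div_mul_eq_mul_div, div_le_div_iff₀ hE0 hE2]
  have := pair_growth hε h0 n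
  linarith [this]

lemma t_upper {ε : ℝ} (hε : 0 < ε) (n : ℕ) : tq ε n ≤ 1 + 2*ε*((n:ℝ)+1) := by
  have hE := EE_pos hε n
  have hEl := EE_ge hε n
  have hO := OO_le_lin hε n
  have hEnn := EE_pos hε n
  unfold tq
  rw [div_le_iff₀ hE]
  have hd : (0:ℝ) < 1 + 2*ε*((n:ℝ)+1) := by positivity
  have h2 : ε * ((n:ℝ)+1) ≤ (1 + 2*ε*((n:ℝ)+1)) * EE ε n := by
    have := mul_le_mul_of_nonneg_left hEl hd.le
    rw [mul_div_cancel₀] at this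
    · linarith
    · positivity
  linarith

lemma chain {ε : ℝ} (hε : 0 < ε) (h0 : EE ε 0 < OO ε 0) (m : ℕ) :
    ∀ j, j ≤ m → tq ε 1 * (1 + 2 / Real.sqrt (ε * (2*(m:ℝ)+1)))^j ≤ tq ε (2*j+1) := by
  have hsm : (0:ℝ) < Real.sqrt (ε * (2*(m:ℝ)+1)) := Real.sqrt_pos.mpr (by positivity)
  set X := 2 / Real.sqrt (ε * (2*(m:ℝ)+1)) with hXdef
  have hX : 0 < X := by positivity
  intro j
  induction j with
  | zero => simp
  | succ j ih =>
    intro hjm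
    have ihj := ih (by omega)
    have hstep := t_pair hε h0 (2*j+1)
    -- x_j = 2 / √(ε * (2j+3)) ≥ X
    have hsle : Real.sqrt (ε * (2*(j:ℝ)+3)) ≤ Real.sqrt (ε * (2*(m:ℝ)+1)) := by
      apply Real.sqrt_le_sqrt
      have : (2*(j:ℝ)+3) ≤ 2*(m:ℝ)+1 := by
        have : (j:ℝ) + 1 ≤ (m:ℝ) := by exact_mod_cast hjm
        linarith
      nlinarith
    have hsj : (0:ℝ) < Real.sqrt (ε * (2*(j:ℝ)+3)) := Real.sqrt_pos.mpr (by positivity)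
    have hXle : X ≤ 2 / Real.sqrt (ε * (2*(j:ℝ)+3)) := by
      rw [hXdef]
      exact div_le_div_of_nonneg_left (by norm_num) hsj hsle
    have hcast : ((2*j+1 : ℕ):ℝ) + 2 = 2*(j:ℝ)+3 := by push_cast; ring
    rw [hcast] at hstep
    have htpos := tq_pos hε h0 (2*j+1)
    calc tq ε 1 * (1+X)^(j+1) = (tq ε 1 * (1+X)^j) * (1+X) := by ring
      _ ≤ tq ε (2*j+1) * (1+X) := by
          apply mul_le_mul_of_nonneg_right ihj (by linarith)
      _ ≤ tq ε (2*j+1) * (1 + 2 / Real.sqrt (ε * (2*(j:ℝ)+3))) := by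
          apply mul_le_mul_of_nonneg_left (by linarith) htpos.le
      _ ≤ tq ε (2*j+1+2) := hstep
      _ = tq ε (2*(j+1)+1) := by ring_nf

lemma no_gap {ε : ℝ} (hε : 0 < ε) : ¬ (EE ε 0 < OO ε 0) := by
  intro h0
  set t1 := tq ε 1 with ht1def
  have ht1 : 0 < t1 := tq_pos hε h0 1
  set B := 343*ε^3*(1+16*ε)^2/(64*t1^2) with hBdef
  obtain ⟨q, hq⟩ := exists_nat_gt B
  have hB : 0 < B := by positivity
  have hq1 : 1 ≤ q := by
    by_contra h
    have : q = 0 := by omega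
    rw [this] at hq
    norm_num at hq
    linarith
  have hq1' : (1:ℝ) ≤ (q:ℝ) := by exact_mod_cast hq1
  have hqpos : (0:ℝ) < q := by linarith
  -- the chain bound with m = 3q, j = 3q
  have hch := chain hε h0 (3*q) (3*q) le_rfl
  set s := Real.sqrt (ε * (2*((3*q:ℕ):ℝ)+1)) with hsdef
  have hspos : (0:ℝ) < s := Real.sqrt_pos.mpr (by positivity)
  set X := 2 / s with hXdef
  have hXpos : 0 < X := by positivity
  -- upper bound
  have hup := t_upper hε (2*(3*q)+1)
  have hupcast : ((2*(3*q)+1 : ℕ):ℝ) + 1 = 6*(q:ℝ)+2 := by push_cast; ring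
  rw [hupcast] at hup
  -- Bernoulli
  have hBern : ((q:ℝ) * X)^3 ≤ (1+X)^(3*q) := by
    have h1 : 1 + (q:ℝ)*X ≤ (1+X)^q := one_add_mul_le_pow (by linarith) q
    have h2 : (q:ℝ)*X ≤ (1+X)^q := by nlinarith
    have h3 : ((q:ℝ)*X)^3 ≤ ((1+X)^q)^3 := by
      apply pow_le_pow_left₀ (by positivity) h2
    calc ((q:ℝ)*X)^3 ≤ ((1+X)^q)^3 := h3
      _ = (1+X)^(q*3) := by rw [pow_mul]
      _ = (1+X)^(3*q) := by rw [mul_comm]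
  have hlow : t1 * ((q:ℝ)*X)^3 ≤ tq ε (2*(3*q)+1) := by
    calc t1 * ((q:ℝ)*X)^3 ≤ t1 * (1+X)^(3*q) := mul_le_mul_of_nonneg_left hBern ht1.le
      _ ≤ tq ε (2*(3*q)+1) := hch
  -- now the numeric contradiction
  have hcombined : t1 * ((q:ℝ)*X)^3 ≤ 1 + 2*ε*(6*(q:ℝ)+2) := le_trans hlow hup
  -- s' := √(7εq), s ≤ s'
  set s' := Real.sqrt (7*ε*(q:ℝ)) with hs'def
  have hs'pos : (0:ℝ) < s' := Real.sqrt_pos.mpr (by positivity)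
  have hs'sq : s'^2 = 7*ε*(q:ℝ) := Real.sq_sqrt (by positivity)
  have hss' : s ≤ s' := by
    rw [hsdef, hs'def]
    apply Real.sqrt_le_sqrt
    push_cast
    nlinarith
  have hXge : 2/s' ≤ X := by
    rw [hXdef]
    exact div_le_div_of_nonneg_left (by norm_num) hspos hss'
  -- key strict inequality : 1 + 2ε(6q+2) < t1 * (q * (2/s'))^3
  have hkey : 1 + 2*ε*(6*(q:ℝ)+2) < t1 * ((q:ℝ) * (2/s'))^3 := by
    have e1 : ((q:ℝ) * (2/s'))^3 = 8*(q:ℝ)^3 / s'^3 := by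
      field_simp; ring
    rw [e1, mul_div_assoc']
    rw [lt_div_iff₀ (by positivity : (0:ℝ) < s'^3)]
    -- goal : (1+2ε(6q+2)) * s'^3 < t1 * (8 q^3)  (up to arrangement)
    have hUb : 1 + 2*ε*(6*(q:ℝ)+2) ≤ (1+16*ε)*(q:ℝ) := by nlinarith
    have hs3 : s'^3 = (7*ε*(q:ℝ))*s' := by
      have : s'^3 = s'^2 * s' := by ring
      rw [this, hs'sq]
    -- suffices : 7ε(1+16ε) s' < 8 t1 q
    have hsq : (7*ε*(1+16*ε)*s')^2 < (8*t1*(q:ℝ))^2 := by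
      have h1 : (7*ε*(1+16*ε)*s')^2 = 49*ε^2*(1+16*ε)^2*(7*ε*(q:ℝ)) := by
        rw [mul_pow, mul_pow, hs'sq]; ring
      have h2 : (8*t1*(q:ℝ))^2 = 64*t1^2*(q:ℝ)^2 := by ring
      rw [h1, h2]
      -- 343 ε^3 (1+16ε)^2 q < 64 t1^2 q^2 ⇔ B < q
      rw [hBdef] at hq
      have hq' : 343*ε^3*(1+16*ε)^2 < (q:ℝ)*(64*t1^2) :=
        (div_lt_iff₀ (by positivity)).mp hq
      have h5 := mul_lt_mul_of_pos_right hq' hqpos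
      calc 49*ε^2*(1+16*ε)^2*(7*ε*(q:ℝ)) = (343*ε^3*(1+16*ε)^2)*(q:ℝ) := by ring
        _ < ((q:ℝ)*(64*t1^2))*(q:ℝ) := h5
        _ = 64*t1^2*(q:ℝ)^2 := by ring
    have hstrict : 7*ε*(1+16*ε)*s' < 8*t1*(q:ℝ) :=
      lt_of_pow_lt_pow_left₀ 2 (by positivity) hsq
    calc (1 + 2*ε*(6*(q:ℝ)+2)) * s'^3 ≤ ((1+16*ε)*(q:ℝ)) * ((7*ε*(q:ℝ))*s') := by
          rw [← hs3]
          apply mul_le_mul_of_nonneg_right hUb (by positivity)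
      _ = (7*ε*(1+16*ε)*s') * (q:ℝ)^2 := by ring
      _ < (8*t1*(q:ℝ)) * (q:ℝ)^2 := by
          apply mul_lt_mul_of_pos_right hstrict (by positivity)
      _ = t1 * (8*(q:ℝ)^3) := by ring
  have hmono : t1 * ((q:ℝ) * (2/s'))^3 ≤ t1 * ((q:ℝ)*X)^3 := by
    apply mul_le_mul_of_nonneg_left _ ht1.le
    apply pow_le_pow_left₀ (by positivity)
    apply mul_le_mul_of_nonneg_left hXge (by positivity)
  linarith

lemma OO_eq_EE {ε : ℝ} (hε : 0 < ε) : ∀ n, OO ε n = EE ε n := by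
  apply all_eq_of_eq0 hε
  exact le_antisymm (not_lt.mp (no_gap hε)) (EE_le_OO hε 0)

end S19

namespace S19

lemma tendsto_of_even_odd {f : ℕ → ℝ} {L : ℝ}
    (he : Tendsto (fun j => f (2*j)) atTop (nhds L))
    (ho : Tendsto (fun j => f (2*j+1)) atTop (nhds L)) :
    Tendsto f atTop (nhds L) := by
  rw [Metric.tendsto_atTop] at he ho ⊢
  intro δ hδ
  obtain ⟨N1, h1⟩ := he δ hδ
  obtain ⟨N2, h2⟩ := ho δ hδ
  refine ⟨2*N1+2*N2+1, fun k hk => ?_⟩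
  rcases Nat.even_or_odd k with ⟨j, hj⟩ | ⟨j, hj⟩
  · have hjN : N1 ≤ j := by omega
    have := h1 j hjN
    simpa [show 2*j = k by omega] using this
  · have hjN : N2 ≤ j := by omega
    have := h2 j hjN
    simpa [show 2*j+1 = k by omega] using this

lemma tendsto_full {ε : ℝ} (hε : 0 < ε) (n : ℕ) :
    Tendsto (fun k => bnd ε k n) atTop (nhds (EE ε n)) := by
  apply tendsto_of_even_odd (tendsto_even hε n)
  have := tendsto_odd hε n
  rwa [OO_eq_EE hε n] at this

end S19


/-- For each `n`, the lower bounds `b_n^{(2j-1)}` and upper bounds `b_n^{(2j)}`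
converge to a common limit as `j → ∞`; equivalently `Δ_n^{(k)} → 0` as `k → ∞`. -/
theorem statement19 (ε : ℝ) (hε : 0 < ε) (n : ℕ) :
    (∃ L : ℝ,
      Filter.Tendsto (fun j : ℕ => bnd ε (2*j) n) Filter.atTop (nhds L) ∧
      Filter.Tendsto (fun j : ℕ => bnd ε (2*j+1) n) Filter.atTop (nhds L)) ∧
    Filter.Tendsto (fun k : ℕ => Δd ε k n) Filter.atTop (nhds 0) := by
  constructor
  · refine ⟨S19.EE ε n, S19.tendsto_even hε n, ?_⟩
    have := S19.tendsto_odd hε n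
    rwa [S19.OO_eq_EE hε n] at this
  · have hfull := S19.tendsto_full hε n
    have hsh : Tendsto (fun k => bnd ε (k+1) n) atTop (nhds (S19.EE ε n)) :=
      hfull.comp (tendsto_add_atTop_nat 1)
    have hdiff : Tendsto (fun k => rho ε (k+1) n - rho ε k n) atTop (nhds 0) := by
      have h := (hsh.sub hfull).div_const (ε * ((n:ℝ)+1))
      simp only [sub_self, zero_div] at h
      convert h using 2 with k
      simp [rho, sub_div]
    have habs : Tendsto (fun k => |rho ε (k+1) n - rho ε k n|) atTop (nhds 0) := by
      have := hdiff.abs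
      simpa using this
    apply squeeze_zero_norm _ habs
    intro k
    simp [Δd, abs_mul, abs_pow, Real.norm_eq_abs]
end
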